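/- arXiv:1008.3279 — 4 statements merged into one kernel-verified Lean document; each statement's English description precedes it below -/
import Mathlib

section
/- There exist δ>0 and λ₀≥1, depending only on T, T₀, r, σ, β and φ₀, such that for all λ≥λ₀ and every admissible v (v infinitely differentiable on [0,T]×[0,1] with v(t,0)=v(t,1)=∂_x v(t,0)=∂_x v(t,1)=0 for all t), the function w=e^{−λφ}v satisfies I(w)+I(w_x)+I(w_{2x})+I(w_{3x}) ≥ δ‖w‖²_{λ,φ}. -/
open MeasureTheory Set

/-- time derivative of a function of `(t, x)` -/
noncomputable def pdt (u : ℝ → ℝ → ℝ) (t x : ℝ) : ℝ := deriv (fun s => u s x) t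

/-- the Carleman weight `φ(t,x) = β(x)/φ₀(t)` -/
noncomputable def phiW (β φ₀ : ℝ → ℝ) : ℝ → ℝ → ℝ := fun t x => β x / φ₀ t

/-- `P₁w = 6λ²φ_x²σw_xx + λ⁴φ_x⁴σw + (σw_xx)_xx + 6λ²(φ_x²σ)_x w_x` -/
noncomputable def P1op (σ : ℝ → ℝ) (φ : ℝ → ℝ → ℝ) (lam : ℝ) (w : ℝ → ℝ → ℝ) (t x : ℝ) : ℝ :=
  6*lam^2*(deriv (φ t) x)^2*(σ x)*(iteratedDeriv 2 (w t) x)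
  + lam^4*(deriv (φ t) x)^4*(σ x)*(w t x)
  + iteratedDeriv 2 (fun z => σ z * iteratedDeriv 2 (w t) z) x
  + 6*lam^2*(deriv (fun z => (deriv (φ t) z)^2*(σ z)) x)*(deriv (w t) x)

/-- `P₂w = w_t + 4λ³φ_x³σw_x + 4λφ_xσw_xxx + 4λ³φ_x(φ_x²σ)_x w` -/
noncomputable def P2op (σ : ℝ → ℝ) (φ : ℝ → ℝ → ℝ) (lam : ℝ) (w : ℝ → ℝ → ℝ) (t x : ℝ) : ℝ :=
  pdt w t x
  + 4*lam^3*(deriv (φ t) x)^3*(σ x)*(deriv (w t) x)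
  + 4*lam*(deriv (φ t) x)*(σ x)*(iteratedDeriv 3 (w t) x)
  + 4*lam^3*(deriv (φ t) x)*(deriv (fun z => (deriv (φ t) z)^2*(σ z)) x)*(w t x)

/-- the weighted Carleman norm `‖w‖²_{λ,φ}` -/
noncomputable def carlNormSq (T lam : ℝ) (φ w : ℝ → ℝ → ℝ) : ℝ :=
  ∫ t in Ioo (0:ℝ) T, ∫ x in Ioo (0:ℝ) 1,
    (lam^7*(φ t x)^7*(w t x)^2 + lam^5*(φ t x)^5*(deriv (w t) x)^2
     + lam^3*(φ t x)^3*(iteratedDeriv 2 (w t) x)^2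
     + lam*(φ t x)*(iteratedDeriv 3 (w t) x)^2)

/-- the boundary density appearing in `I_x` -/
noncomputable def bdryDens (σ : ℝ → ℝ) (φ : ℝ → ℝ → ℝ) (lam : ℝ) (w : ℝ → ℝ → ℝ) (t x : ℝ) : ℝ :=
  10*lam^3*(deriv (φ t) x)^3*(σ x)^2*(iteratedDeriv 2 (w t) x)^2
  + 2*lam*(deriv (φ t) x)*(σ x)*(iteratedDeriv 2 σ x)*(iteratedDeriv 2 (w t) x)^2
  + 2*lam*(deriv (φ t) x)*(σ x)^2*(iteratedDeriv 3 (w t) x)^2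

/-- the boundary term `I_x` -/
noncomputable def IxTerm (T : ℝ) (σ : ℝ → ℝ) (φ : ℝ → ℝ → ℝ) (lam : ℝ) (w : ℝ → ℝ → ℝ) : ℝ :=
  ∫ t in Ioo (0:ℝ) T, (bdryDens σ φ lam w t 1 - bdryDens σ φ lam w t 0)

/-- the conjugated function `w = e^{-λφ} v` -/
noncomputable def conjW (β φ₀ : ℝ → ℝ) (lam : ℝ) (v : ℝ → ℝ → ℝ) : ℝ → ℝ → ℝ :=
  fun t x => Real.exp (-lam * phiW β φ₀ t x) * v t x

/-- `I(w) = -6λ⁷∬ φ_x⁶ φ_xx σ² |w|²` -/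
noncomputable def Iw0 (T : ℝ) (σ : ℝ → ℝ) (φ : ℝ → ℝ → ℝ) (lam : ℝ) (w : ℝ → ℝ → ℝ) : ℝ :=
  -6*lam^7 * ∫ t in Ioo (0:ℝ) T, ∫ x in Ioo (0:ℝ) 1,
    (deriv (φ t) x)^6*(iteratedDeriv 2 (φ t) x)*(σ x)^2*(w t x)^2

/-- `I(w_x) = -λ⁵∬ φ_x⁴ σ (30φ_xx σ + 12φ_x σ') |w_x|²` -/
noncomputable def Iw1 (T : ℝ) (σ : ℝ → ℝ) (φ : ℝ → ℝ → ℝ) (lam : ℝ) (w : ℝ → ℝ → ℝ) : ℝ :=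
  -lam^5 * ∫ t in Ioo (0:ℝ) T, ∫ x in Ioo (0:ℝ) 1,
    (deriv (φ t) x)^4*(σ x)*(30*(iteratedDeriv 2 (φ t) x)*(σ x)
      + 12*(deriv (φ t) x)*(deriv σ x))*(deriv (w t) x)^2

/-- `I(w_{2x}) = -λ³∬ φ_x² σ (58φ_xx σ + 40φ_x σ') |w_xx|²` -/
noncomputable def Iw2 (T : ℝ) (σ : ℝ → ℝ) (φ : ℝ → ℝ → ℝ) (lam : ℝ) (w : ℝ → ℝ → ℝ) : ℝ :=
  -lam^3 * ∫ t in Ioo (0:ℝ) T, ∫ x in Ioo (0:ℝ) 1,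
    (deriv (φ t) x)^2*(σ x)*(58*(iteratedDeriv 2 (φ t) x)*(σ x)
      + 40*(deriv (φ t) x)*(deriv σ x))*(iteratedDeriv 2 (w t) x)^2

/-- `I(w_{3x}) = -λ∬ σ (2φ_xx σ - 4φ_x σ') |w_xxx|²` -/
noncomputable def Iw3 (T : ℝ) (σ : ℝ → ℝ) (φ : ℝ → ℝ → ℝ) (lam : ℝ) (w : ℝ → ℝ → ℝ) : ℝ :=
  -lam * ∫ t in Ioo (0:ℝ) T, ∫ x in Ioo (0:ℝ) 1,
    (σ x)*(2*(iteratedDeriv 2 (φ t) x)*(σ x)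
      - 4*(deriv (φ t) x)*(deriv σ x))*(iteratedDeriv 3 (w t) x)^2



noncomputable def pdv (F : ℝ × ℝ → ℝ) : ℝ × ℝ → ℝ := fun q => fderiv ℝ F q (0, 1)

noncomputable def pdn (F : ℝ × ℝ → ℝ) : ℕ → ℝ × ℝ → ℝ
  | 0 => F
  | k+1 => pdv (pdn F k)

lemma pdv_contDiff {F : ℝ × ℝ → ℝ} (h : ContDiff ℝ (⊤ : ℕ∞) F) : ContDiff ℝ (⊤ : ℕ∞) (pdv F) := by
  have h1 : ContDiff ℝ (⊤ : ℕ∞) (fderiv ℝ F) := h.fderiv_right (by simp)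
  exact (ContinuousLinearMap.apply ℝ ℝ ((0:ℝ), (1:ℝ))).contDiff.comp h1

lemma pdn_contDiff {F : ℝ × ℝ → ℝ} (h : ContDiff ℝ (⊤ : ℕ∞) F) (k : ℕ) : ContDiff ℝ (⊤ : ℕ∞) (pdn F k) := by
  induction k with
  | zero => exact h
  | succ k ih => exact pdv_contDiff ih

lemma hasDerivAt_section {F : ℝ × ℝ → ℝ} (h : ContDiff ℝ (⊤ : ℕ∞) F) (t x : ℝ) :
    HasDerivAt (fun y => F (t, y)) (pdv F (t, x)) x := by
  have hc : HasDerivAt (fun y : ℝ => ((t : ℝ), y)) ((0:ℝ), (1:ℝ)) x :=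
    (hasDerivAt_const x t).prodMk (hasDerivAt_id x)
  exact ((h.differentiable (by simp) (t, x)).hasFDerivAt.comp_hasDerivAt x hc)

lemma pdn_section_hasDerivAt {F : ℝ × ℝ → ℝ} (h : ContDiff ℝ (⊤ : ℕ∞) F) (k : ℕ) (t x : ℝ) :
    HasDerivAt (fun y => pdn F k (t, y)) (pdn F (k+1) (t, x)) x :=
  hasDerivAt_section (pdn_contDiff h k) t x

lemma iteratedDeriv_section {F : ℝ × ℝ → ℝ} (h : ContDiff ℝ (⊤ : ℕ∞) F) (k : ℕ) (t x : ℝ) :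
    iteratedDeriv k (fun y => F (t, y)) x = pdn F k (t, x) := by
  induction k generalizing x with
  | zero => simp [pdn]
  | succ k ih =>
    rw [iteratedDeriv_succ]
    have : iteratedDeriv k (fun y => F (t, y)) = fun y => pdn F k (t, y) := funext fun y => ih y
    rw [this]
    exact (pdn_section_hasDerivAt h k t x).deriv

section conj

variable (β : ℝ → ℝ) (v : ℝ → ℝ → ℝ) (lam c : ℝ)

noncomputable def Eex (x : ℝ) : ℝ := Real.exp (-(lam * (β x * c)))
noncomputable def A0 (x : ℝ) : ℝ := -(lam * (deriv β x * c))
noncomputable def A1 (x : ℝ) : ℝ := -(lam * (iteratedDeriv 2 β x * c))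
noncomputable def A2 (x : ℝ) : ℝ := -(lam * (iteratedDeriv 3 β x * c))

noncomputable def W0ex (t x : ℝ) : ℝ := Eex β lam c x * v t x
noncomputable def W1ex (t x : ℝ) : ℝ :=
  Eex β lam c x * (pdn (Function.uncurry v) 1 (t, x) + A0 β lam c x * v t x)
noncomputable def W2ex (t x : ℝ) : ℝ :=
  Eex β lam c x * (pdn (Function.uncurry v) 2 (t, x)
    + 2 * A0 β lam c x * pdn (Function.uncurry v) 1 (t, x)
    + ((A0 β lam c x)^2 + A1 β lam c x) * v t x)
noncomputable def W3ex (t x : ℝ) : ℝ :=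
  Eex β lam c x * (pdn (Function.uncurry v) 3 (t, x)
    + 3 * A0 β lam c x * pdn (Function.uncurry v) 2 (t, x)
    + 3 * ((A0 β lam c x)^2 + A1 β lam c x) * pdn (Function.uncurry v) 1 (t, x)
    + ((A0 β lam c x)^3 + 3 * A0 β lam c x * A1 β lam c x + A2 β lam c x) * v t x)

variable {β v}

lemma contDiff_deriv_beta (hβ : ContDiff ℝ 4 β) : ContDiff ℝ 3 (deriv β) := by
  have h4 : ContDiff ℝ ((3:ℕ) + 1 : ℕ) β := by exact_mod_cast hβ
  exact_mod_cast (contDiff_succ_iff_deriv.mp (by exact_mod_cast h4)).2.2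

lemma itd2_eq : iteratedDeriv 2 β = deriv (deriv β) := by
  funext x; rw [iteratedDeriv_succ, iteratedDeriv_one]

lemma itd3_eq : iteratedDeriv 3 β = deriv (deriv (deriv β)) := by
  funext x; rw [iteratedDeriv_succ, iteratedDeriv_succ, iteratedDeriv_one]

lemma contDiff_itd2_beta (hβ : ContDiff ℝ 4 β) : ContDiff ℝ 2 (iteratedDeriv 2 β) := by
  rw [itd2_eq]
  have h3 : ContDiff ℝ ((2:ℕ∞) + 1) (deriv β) := by exact_mod_cast contDiff_deriv_beta hβ
  exact_mod_cast (contDiff_succ_iff_deriv.mp (by exact_mod_cast h3)).2.2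

lemma hasDerivAt_beta (hβ : ContDiff ℝ 4 β) (x : ℝ) : HasDerivAt β (deriv β x) x :=
  ((hβ.differentiable (by norm_num)) x).hasDerivAt

lemma hasDerivAt_dbeta (hβ : ContDiff ℝ 4 β) (x : ℝ) : HasDerivAt (deriv β) (iteratedDeriv 2 β x) x := by
  rw [itd2_eq]
  exact (((contDiff_deriv_beta hβ).differentiable (by norm_num)) x).hasDerivAt

lemma hasDerivAt_d2beta (hβ : ContDiff ℝ 4 β) (x : ℝ) : HasDerivAt (iteratedDeriv 2 β) (iteratedDeriv 3 β x) x := by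
  have h2 : ContDiff ℝ 2 (deriv (deriv β)) := by rw [← itd2_eq]; exact contDiff_itd2_beta hβ
  rw [itd3_eq, itd2_eq]
  exact ((h2.differentiable (by norm_num)) x).hasDerivAt

end conj

section formulas

variable {β : ℝ → ℝ} {v : ℝ → ℝ → ℝ} (lam c : ℝ)

lemma hasDerivAt_Eex (hβ : ContDiff ℝ 4 β) (x : ℝ) :
    HasDerivAt (Eex β lam c) (A0 β lam c x * Eex β lam c x) x := by
  have h1 : HasDerivAt (fun y => -(lam * (β y * c))) (-(lam * (deriv β x * c))) x :=
    (((hasDerivAt_beta hβ x).mul_const c).const_mul lam).neg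
  have h2 := h1.exp
  rw [show A0 β lam c x * Eex β lam c x
      = Real.exp (-(lam * (β x * c))) * -(lam * (deriv β x * c)) from by
    simp only [A0, Eex]; ring]
  exact h2

lemma hasDerivAt_A0 (hβ : ContDiff ℝ 4 β) (x : ℝ) :
    HasDerivAt (A0 β lam c) (A1 β lam c x) x :=
  (((hasDerivAt_dbeta hβ x).mul_const c).const_mul lam).neg

lemma hasDerivAt_A1 (hβ : ContDiff ℝ 4 β) (x : ℝ) :
    HasDerivAt (A1 β lam c) (A2 β lam c x) x :=
  (((hasDerivAt_d2beta hβ x).mul_const c).const_mul lam).neg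

lemma hasDerivAt_v (hv : ContDiff ℝ (⊤ : ℕ∞) (Function.uncurry v)) (t x : ℝ) :
    HasDerivAt (fun y => v t y) (pdn (Function.uncurry v) 1 (t, x)) x :=
  hasDerivAt_section hv t x

lemma hasDerivAt_W0 (hβ : ContDiff ℝ 4 β) (hv : ContDiff ℝ (⊤ : ℕ∞) (Function.uncurry v)) (t x : ℝ) :
    HasDerivAt (fun y => W0ex β v lam c t y) (W1ex β v lam c t x) x := by
  have h := (hasDerivAt_Eex lam c hβ x).mul (hasDerivAt_v hv t x)
  exact h.congr_deriv (by simp only [W1ex, W0ex]; ring)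

lemma hasDerivAt_W1 (hβ : ContDiff ℝ 4 β) (hv : ContDiff ℝ (⊤ : ℕ∞) (Function.uncurry v)) (t x : ℝ) :
    HasDerivAt (fun y => W1ex β v lam c t y) (W2ex β v lam c t x) x := by
  have h := (hasDerivAt_Eex lam c hβ x).mul
    ((pdn_section_hasDerivAt hv 1 t x).add
      ((hasDerivAt_A0 lam c hβ x).mul (hasDerivAt_v hv t x)))
  exact h.congr_deriv (by simp only [W2ex, W1ex, Pi.add_apply, Pi.mul_apply, Pi.pow_apply]; ring)

lemma hasDerivAt_W2 (hβ : ContDiff ℝ 4 β) (hv : ContDiff ℝ (⊤ : ℕ∞) (Function.uncurry v)) (t x : ℝ) :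
    HasDerivAt (fun y => W2ex β v lam c t y) (W3ex β v lam c t x) x := by
  have h := (hasDerivAt_Eex lam c hβ x).mul
    (((pdn_section_hasDerivAt hv 2 t x).add
        (((hasDerivAt_A0 lam c hβ x).const_mul 2).mul (pdn_section_hasDerivAt hv 1 t x))).add
      ((((hasDerivAt_A0 lam c hβ x).pow 2).add (hasDerivAt_A1 lam c hβ x)).mul
        (hasDerivAt_v hv t x)))
  exact h.congr_deriv (by simp only [W3ex, W2ex, Pi.add_apply, Pi.mul_apply, Pi.pow_apply]; ring)

lemma conj_deriv1 (hβ : ContDiff ℝ 4 β) (hv : ContDiff ℝ (⊤ : ℕ∞) (Function.uncurry v)) (t x : ℝ) :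
    deriv (fun y => W0ex β v lam c t y) x = W1ex β v lam c t x :=
  (hasDerivAt_W0 lam c hβ hv t x).deriv

lemma conj_deriv2 (hβ : ContDiff ℝ 4 β) (hv : ContDiff ℝ (⊤ : ℕ∞) (Function.uncurry v)) (t x : ℝ) :
    iteratedDeriv 2 (fun y => W0ex β v lam c t y) x = W2ex β v lam c t x := by
  rw [iteratedDeriv_succ, iteratedDeriv_one]
  have h1 : deriv (fun y => W0ex β v lam c t y) = fun y => W1ex β v lam c t y :=
    funext fun y => conj_deriv1 lam c hβ hv t y
  rw [h1]
  exact (hasDerivAt_W1 lam c hβ hv t x).deriv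

lemma conj_deriv3 (hβ : ContDiff ℝ 4 β) (hv : ContDiff ℝ (⊤ : ℕ∞) (Function.uncurry v)) (t x : ℝ) :
    iteratedDeriv 3 (fun y => W0ex β v lam c t y) x = W3ex β v lam c t x := by
  rw [iteratedDeriv_succ]
  have h2 : iteratedDeriv 2 (fun y => W0ex β v lam c t y) = fun y => W2ex β v lam c t y :=
    funext fun y => conj_deriv2 lam c hβ hv t y
  rw [h2]
  exact (hasDerivAt_W2 lam c hβ hv t x).deriv

end formulas

section continuity

variable {β : ℝ → ℝ} {v : ℝ → ℝ → ℝ} (lam : ℝ)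

lemma continuous_itd3 (hβ : ContDiff ℝ 4 β) : Continuous (iteratedDeriv 3 β) := by
  rw [itd3_eq]
  have h2 : ContDiff ℝ 2 (deriv (deriv β)) := by rw [← itd2_eq]; exact contDiff_itd2_beta hβ
  exact h2.continuous_deriv (by norm_num)

lemma continuous_Eex_full (hβ : ContDiff ℝ 4 β) :
    Continuous (fun q : ℝ × ℝ × ℝ => Eex β lam q.1 q.2.2) := by
  have hx : Continuous (fun q : ℝ × ℝ × ℝ => q.2.2) := continuous_snd.comp continuous_snd
  exact Real.continuous_exp.comp
    ((continuous_const.mul ((hβ.continuous.comp hx).mul continuous_fst)).neg)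

lemma continuous_A0_full (hβ : ContDiff ℝ 4 β) :
    Continuous (fun q : ℝ × ℝ × ℝ => A0 β lam q.1 q.2.2) := by
  have hx : Continuous (fun q : ℝ × ℝ × ℝ => q.2.2) := continuous_snd.comp continuous_snd
  exact (continuous_const.mul (((contDiff_deriv_beta hβ).continuous.comp hx).mul continuous_fst)).neg

lemma continuous_A1_full (hβ : ContDiff ℝ 4 β) :
    Continuous (fun q : ℝ × ℝ × ℝ => A1 β lam q.1 q.2.2) := by
  have hx : Continuous (fun q : ℝ × ℝ × ℝ => q.2.2) := continuous_snd.comp continuous_snd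
  exact (continuous_const.mul (((contDiff_itd2_beta hβ).continuous.comp hx).mul continuous_fst)).neg

lemma continuous_A2_full (hβ : ContDiff ℝ 4 β) :
    Continuous (fun q : ℝ × ℝ × ℝ => A2 β lam q.1 q.2.2) := by
  have hx : Continuous (fun q : ℝ × ℝ × ℝ => q.2.2) := continuous_snd.comp continuous_snd
  exact (continuous_const.mul (((continuous_itd3 hβ).comp hx).mul continuous_fst)).neg

lemma continuous_pdn_full (hv : ContDiff ℝ (⊤ : ℕ∞) (Function.uncurry v)) (k : ℕ) :
    Continuous (fun q : ℝ × ℝ × ℝ => pdn (Function.uncurry v) k q.2) :=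
  (pdn_contDiff hv k).continuous.comp continuous_snd

lemma continuous_v_full (hv : ContDiff ℝ (⊤ : ℕ∞) (Function.uncurry v)) :
    Continuous (fun q : ℝ × ℝ × ℝ => v q.2.1 q.2.2) :=
  continuous_pdn_full hv 0

lemma continuous_W0ex_full (hβ : ContDiff ℝ 4 β) (hv : ContDiff ℝ (⊤ : ℕ∞) (Function.uncurry v)) :
    Continuous (fun q : ℝ × ℝ × ℝ => W0ex β v lam q.1 q.2.1 q.2.2) :=
  (continuous_Eex_full lam hβ).mul (continuous_v_full hv)

lemma continuous_W1ex_full (hβ : ContDiff ℝ 4 β) (hv : ContDiff ℝ (⊤ : ℕ∞) (Function.uncurry v)) :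
    Continuous (fun q : ℝ × ℝ × ℝ => W1ex β v lam q.1 q.2.1 q.2.2) :=
  (continuous_Eex_full lam hβ).mul
    ((continuous_pdn_full hv 1).add ((continuous_A0_full lam hβ).mul (continuous_v_full hv)))

lemma continuous_W2ex_full (hβ : ContDiff ℝ 4 β) (hv : ContDiff ℝ (⊤ : ℕ∞) (Function.uncurry v)) :
    Continuous (fun q : ℝ × ℝ × ℝ => W2ex β v lam q.1 q.2.1 q.2.2) :=
  (continuous_Eex_full lam hβ).mul
    (((continuous_pdn_full hv 2).add
      ((continuous_const.mul (continuous_A0_full lam hβ)).mul (continuous_pdn_full hv 1))).add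
      ((((continuous_A0_full lam hβ).pow 2).add (continuous_A1_full lam hβ)).mul
        (continuous_v_full hv)))

lemma continuous_W3ex_full (hβ : ContDiff ℝ 4 β) (hv : ContDiff ℝ (⊤ : ℕ∞) (Function.uncurry v)) :
    Continuous (fun q : ℝ × ℝ × ℝ => W3ex β v lam q.1 q.2.1 q.2.2) :=
  (continuous_Eex_full lam hβ).mul
    ((((continuous_pdn_full hv 3).add
      ((continuous_const.mul (continuous_A0_full lam hβ)).mul (continuous_pdn_full hv 2))).add
      ((continuous_const.mul (((continuous_A0_full lam hβ).pow 2).add (continuous_A1_full lam hβ))).mul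
        (continuous_pdn_full hv 1))).add
      (((((continuous_A0_full lam hβ).pow 3).add
        ((continuous_const.mul (continuous_A0_full lam hβ)).mul (continuous_A1_full lam hβ))).add
        (continuous_A2_full lam hβ)).mul (continuous_v_full hv)))

end continuity

section bounds

lemma combo_bound3 {CV m V0 V1 V2 V3 a0 a1 a2 : ℝ} (hCV : 0 ≤ CV) (hm : 0 ≤ m)
    (hV0 : |V0| ≤ CV) (hV1 : |V1| ≤ CV) (hV2 : |V2| ≤ CV) (hV3 : |V3| ≤ CV)
    (h0 : |a0| ≤ m) (h1 : |a1| ≤ m) (h2 : |a2| ≤ m) :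
    |V3 + 3*a0*V2 + 3*(a0^2+a1)*V1 + (a0^3+3*a0*a1+a2)*V0| ≤ 7*CV*(1+m)^3 := by
  have p1 : |3*a0*V2| ≤ 3*(m*CV) := by
    rw [show (3:ℝ)*a0*V2 = 3*(a0*V2) by ring, abs_mul, abs_mul,
      abs_of_nonneg (by norm_num : (0:ℝ) ≤ 3)]
    have := mul_le_mul h0 hV2 (abs_nonneg _) hm
    linarith
  have q2 : |a0^2+a1| ≤ m^2+m := by
    refine (abs_add_le _ _).trans ?_
    have : |a0^2| ≤ m^2 := by
      rw [abs_pow]; exact pow_le_pow_left₀ (abs_nonneg _) h0 2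
    linarith
  have p2 : |3*(a0^2+a1)*V1| ≤ 3*((m^2+m)*CV) := by
    rw [show (3:ℝ)*(a0^2+a1)*V1 = 3*((a0^2+a1)*V1) by ring, abs_mul, abs_mul,
      abs_of_nonneg (by norm_num : (0:ℝ) ≤ 3)]
    have := mul_le_mul q2 hV1 (abs_nonneg _) (by positivity)
    linarith
  have q3 : |a0^3+3*a0*a1+a2| ≤ m^3+3*m^2+m := by
    have q31 : |a0^3| ≤ m^3 := by
      rw [abs_pow]; exact pow_le_pow_left₀ (abs_nonneg _) h0 3
    have q32 : |3*a0*a1| ≤ 3*m^2 := by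
      rw [show (3:ℝ)*a0*a1 = 3*(a0*a1) by ring, abs_mul, abs_mul,
        abs_of_nonneg (by norm_num : (0:ℝ) ≤ 3)]
      have := mul_le_mul h0 h1 (abs_nonneg _) hm
      nlinarith
    have h4 := abs_add_le (a0^3) (3*a0*a1)
    have h5 := abs_add_le (a0^3+3*a0*a1) a2
    linarith
  have p3 : |(a0^3+3*a0*a1+a2)*V0| ≤ (m^3+3*m^2+m)*CV := by
    rw [abs_mul]
    exact mul_le_mul q3 hV0 (abs_nonneg _) (by positivity)
  have h4 := abs_add_le (V3 + 3*a0*V2 + 3*(a0^2+a1)*V1) ((a0^3+3*a0*a1+a2)*V0)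
  have h5 := abs_add_le (V3 + 3*a0*V2) (3*(a0^2+a1)*V1)
  have h6 := abs_add_le V3 (3*a0*V2)
  nlinarith [mul_nonneg hCV hm, mul_nonneg (mul_nonneg hCV hm) hm,
    mul_nonneg (mul_nonneg (mul_nonneg hCV hm) hm) hm]

lemma combo_bound2 {CV m V0 V1 V2 a0 a1 : ℝ} (hCV : 0 ≤ CV) (hm : 0 ≤ m)
    (hV0 : |V0| ≤ CV) (hV1 : |V1| ≤ CV) (hV2 : |V2| ≤ CV)
    (h0 : |a0| ≤ m) (h1 : |a1| ≤ m) :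
    |V2 + 2*a0*V1 + (a0^2+a1)*V0| ≤ 7*CV*(1+m)^3 := by
  have p1 : |2*a0*V1| ≤ 2*(m*CV) := by
    rw [show (2:ℝ)*a0*V1 = 2*(a0*V1) by ring, abs_mul, abs_mul,
      abs_of_nonneg (by norm_num : (0:ℝ) ≤ 2)]
    have := mul_le_mul h0 hV1 (abs_nonneg _) hm
    linarith
  have q2 : |a0^2+a1| ≤ m^2+m := by
    refine (abs_add_le _ _).trans ?_
    have : |a0^2| ≤ m^2 := by
      rw [abs_pow]; exact pow_le_pow_left₀ (abs_nonneg _) h0 2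
    linarith
  have p2 : |(a0^2+a1)*V0| ≤ (m^2+m)*CV := by
    rw [abs_mul]
    exact mul_le_mul q2 hV0 (abs_nonneg _) (by positivity)
  have h5 := abs_add_le (V2 + 2*a0*V1) ((a0^2+a1)*V0)
  have h6 := abs_add_le V2 (2*a0*V1)
  nlinarith [mul_nonneg hCV hm, mul_nonneg (mul_nonneg hCV hm) hm,
    mul_nonneg (mul_nonneg (mul_nonneg hCV hm) hm) hm]

lemma combo_bound1 {CV m V0 V1 a0 : ℝ} (hCV : 0 ≤ CV) (hm : 0 ≤ m)
    (hV0 : |V0| ≤ CV) (hV1 : |V1| ≤ CV) (h0 : |a0| ≤ m) :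
    |V1 + a0*V0| ≤ 7*CV*(1+m)^3 := by
  have p1 : |a0*V0| ≤ m*CV := by
    rw [abs_mul]; exact mul_le_mul h0 hV0 (abs_nonneg _) hm
  have h6 := abs_add_le V1 (a0*V0)
  nlinarith [mul_nonneg hCV hm, mul_nonneg (mul_nonneg hCV hm) hm,
    mul_nonneg (mul_nonneg (mul_nonneg hCV hm) hm) hm]

lemma combo_bound0 {CV m V0 : ℝ} (hCV : 0 ≤ CV) (hm : 0 ≤ m) (hV0 : |V0| ≤ CV) :
    |V0| ≤ 7*CV*(1+m)^3 := by
  nlinarith [mul_nonneg hCV hm, mul_nonneg (mul_nonneg hCV hm) hm,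
    mul_nonneg (mul_nonneg (mul_nonneg hCV hm) hm) hm]

lemma wchain {E Eb comb m CV ct lamB : ℝ} (hE0 : 0 ≤ E) (hEb : E ≤ Eb) (hEb0 : 0 ≤ Eb)
    (hcomb : |comb| ≤ 7*CV*(1+m)^3) (hm : 0 ≤ m) (hmle : 1+m ≤ (1+lamB)*(1+ct))
    (hct : 0 ≤ ct) (hlamB : 0 ≤ lamB) (hCV : 0 ≤ CV) :
    |E * comb| ≤ (7*CV*(1+lamB)^3) * (1+ct)^3 * Eb := by
  rw [abs_mul, abs_of_nonneg hE0]
  calc E * |comb| ≤ Eb * (7*CV*(1+m)^3) :=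
        mul_le_mul hEb hcomb (abs_nonneg _) hEb0
    _ ≤ Eb * (7*CV*((1+lamB)*(1+ct))^3) := by
        have := pow_le_pow_left₀ (by linarith : (0:ℝ) ≤ 1+m) hmle 3
        have h7 : (0:ℝ) ≤ 7*CV := by linarith
        nlinarith [mul_le_mul_of_nonneg_left this h7]
    _ = (7*CV*(1+lamB)^3) * (1+ct)^3 * Eb := by rw [mul_pow]; ring

lemma weight_bound {lam r ct : ℝ} (m : ℕ) (hm : m ≤ 7) (hct : 0 < ct) (hlr : 7 ≤ lam * r) :
    ct^m * ((1+ct)^3)^2 * (Real.exp (-(lam*(r*ct))))^2 ≤ 1 := by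
  have h1 : ct^m ≤ (1+ct)^m := pow_le_pow_left₀ hct.le (by linarith) m
  have h2 : (1+ct)^m ≤ (1+ct)^7 := pow_le_pow_right₀ (by linarith) hm
  have h3 : ct^m * ((1+ct)^3)^2 ≤ (1+ct)^13 := by
    calc ct^m * ((1+ct)^3)^2 ≤ (1+ct)^7 * ((1+ct)^3)^2 := by
          have := h1.trans h2
          have h6 : (0:ℝ) ≤ ((1+ct)^3)^2 := by positivity
          nlinarith [mul_le_mul_of_nonneg_right (h1.trans h2) h6]
      _ = (1+ct)^13 := by ring
  have h4 : (1+ct)^13 ≤ Real.exp (13*ct) := by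
    calc (1+ct)^13 ≤ (Real.exp ct)^13 := by
          apply pow_le_pow_left₀ (by linarith)
          linarith [Real.add_one_le_exp ct]
      _ = Real.exp ((13:ℕ)*ct) := (Real.exp_nat_mul ct 13).symm
      _ = Real.exp (13*ct) := by norm_num
  have h5 : (Real.exp (-(lam*(r*ct))))^2 = Real.exp (-(2*(lam*(r*ct)))) := by
    rw [← Real.exp_nat_mul]; congr 1; push_cast; ring
  calc ct^m * ((1+ct)^3)^2 * (Real.exp (-(lam*(r*ct))))^2
      ≤ (1+ct)^13 * (Real.exp (-(lam*(r*ct))))^2 := by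
        have : (0:ℝ) ≤ (Real.exp (-(lam*(r*ct))))^2 := by positivity
        exact mul_le_mul_of_nonneg_right h3 this
    _ = (1+ct)^13 * Real.exp (-(2*(lam*(r*ct)))) := by rw [h5]
    _ ≤ Real.exp (13*ct) * Real.exp (-(2*(lam*(r*ct)))) :=
        mul_le_mul_of_nonneg_right h4 (le_of_lt (Real.exp_pos _))
    _ = Real.exp (13*ct - 2*(lam*(r*ct))) := by rw [← Real.exp_add]; norm_num [sub_eq_add_neg]
    _ ≤ Real.exp 0 := by
        apply Real.exp_le_exp.2
        nlinarith
    _ = 1 := Real.exp_zero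

lemma dens_bound_gen {lam r ct CF CW co W : ℝ} (m : ℕ) (hm : m ≤ 7)
    (hct : 0 < ct) (hlr : 7 ≤ lam * r)
    (hco : |co| ≤ CF) (hW : |W| ≤ CW * (1+ct)^3 * Real.exp (-(lam*(r*ct)))) :
    |co * ct^m * W^2| ≤ CF * CW^2 := by
  have hCF : 0 ≤ CF := (abs_nonneg co).trans hco
  have hCWe : 0 ≤ CW * (1+ct)^3 * Real.exp (-(lam*(r*ct))) := (abs_nonneg W).trans hW
  have hW2 : W^2 ≤ (CW * (1+ct)^3 * Real.exp (-(lam*(r*ct))))^2 := by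
    rw [← sq_abs]
    exact pow_le_pow_left₀ (abs_nonneg _) hW 2
  have heq : |co * ct^m * W^2| = |co| * (ct^m * W^2) := by
    rw [abs_mul, abs_mul, abs_of_nonneg (pow_nonneg hct.le m), abs_of_nonneg (sq_nonneg W)]
    ring
  rw [heq]
  calc |co| * (ct^m * W^2)
      ≤ CF * (ct^m * (CW * (1+ct)^3 * Real.exp (-(lam*(r*ct))))^2) := by
        apply mul_le_mul hco _ (by positivity) hCF
        exact mul_le_mul_of_nonneg_left hW2 (by positivity)
    _ = CF * CW^2 * (ct^m * ((1+ct)^3)^2 * (Real.exp (-(lam*(r*ct))))^2) := by ring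
    _ ≤ CF * CW^2 * 1 := by
        apply mul_le_mul_of_nonneg_left (weight_bound m hm hct hlr) (by positivity)
    _ = CF * CW^2 := mul_one _

lemma mul3_mono {a b c A B C : ℝ} (h0a : 0 ≤ a) (h0b : 0 ≤ b) (h0c : 0 ≤ c)
    (ha : a ≤ A) (hb : b ≤ B) (hc : c ≤ C) : a*b*c ≤ A*B*C :=
  mul_le_mul (mul_le_mul ha hb h0b (h0a.trans ha)) hc h0c
    (mul_nonneg (h0a.trans ha) (h0b.trans hb))

end bounds

section keyterm
open MeasureTheory

lemma key_term {T K : ℝ} (hT : 0 < T) (D : ℝ → ℝ → ℝ)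
    (hx : ∀ t ∈ Ioo 0 T, ContinuousOn (D t) (Icc 0 1))
    (ht : ∀ x ∈ Ioo (0:ℝ) 1, ∀ t₀ ∈ Ioo 0 T, ContinuousAt (fun t => D t x) t₀)
    (hbd : ∀ t ∈ Ioo 0 T, ∀ x ∈ Ioo (0:ℝ) 1, |D t x| ≤ K) :
    IntegrableOn (fun t => ∫ x in Ioo (0:ℝ) 1, D t x) (Ioo 0 T) := by
  have hK : 0 ≤ K := by
    have := hbd (T/2) ⟨by linarith, by linarith⟩ (1/2) ⟨by norm_num, by norm_num⟩
    exact (abs_nonneg _).trans this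
  have hcont : ContinuousOn (fun t => ∫ x in Ioo (0:ℝ) 1, D t x) (Ioo 0 T) := by
    intro t₀ ht₀
    apply ContinuousAt.continuousWithinAt
    apply continuousAt_of_dominated (bound := fun _ => K)
    · filter_upwards [IsOpen.mem_nhds isOpen_Ioo ht₀] with t htt
      exact ((hx t htt).mono Ioo_subset_Icc_self).aestronglyMeasurable measurableSet_Ioo
    · filter_upwards [IsOpen.mem_nhds isOpen_Ioo ht₀] with t htt
      refine (ae_restrict_iff' measurableSet_Ioo).2 (ae_of_all _ fun x hxx => ?_)
      rw [Real.norm_eq_abs]; exact hbd t htt x hxx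
    · exact integrableOn_const measure_Ioo_lt_top.ne
    · refine (ae_restrict_iff' measurableSet_Ioo).2 (ae_of_all _ fun x hxx => ?_)
      exact ht x hxx t₀ ht₀
  refine ⟨hcont.aestronglyMeasurable measurableSet_Ioo, ?_⟩
  apply HasFiniteIntegral.restrict_of_bounded (C := K) measure_Ioo_lt_top
  refine (ae_restrict_iff' measurableSet_Ioo).2 (ae_of_all _ fun t htt => ?_)
  rw [Real.norm_eq_abs, ← Real.norm_eq_abs]
  have h1 : ‖∫ x in Ioo (0:ℝ) 1, D t x‖ ≤ K * (volume (Ioo (0:ℝ) 1)).toReal := by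
    apply norm_setIntegral_le_of_norm_le_const measure_Ioo_lt_top
    intro x hxx
    rw [Real.norm_eq_abs]; exact hbd t htt x hxx
  simpa [Real.volume_Ioo] using h1
end keyterm


set_option maxHeartbeats 2000000 in
theorem stmt8_coercivity_of_quadratic_forms
    (T T₀ σ₀ r : ℝ) (σ β φ₀ : ℝ → ℝ)
    (hT : 0 < T) (hT₀ : T₀ ∈ Ioo 0 T) (hσ₀ : 0 < σ₀) (hr : 0 < r)
    (hσ : ContDiff ℝ 4 σ) (hσpos : ∀ x ∈ Icc (0:ℝ) 1, σ₀ ≤ σ x)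
    (hβ : ContDiff ℝ 4 β)
    (hβlow : ∀ x ∈ Icc (0:ℝ) 1, r ≤ β x ∧ r ≤ deriv β x ∧ iteratedDeriv 2 β x ≤ -r)
    (hβσ : ∀ x ∈ Icc (0:ℝ) 1, ∀ z ∈ Icc (0:ℝ) 1, |deriv σ x * deriv β x| ≤ r/4 * σ z)
    (hφ₀ : ContDiff ℝ 1 φ₀) (hφ₀0 : φ₀ 0 = 0) (hφ₀T : φ₀ T = 0)
    (hφ₀pos : ∀ t ∈ Ioo 0 T, 0 < φ₀ t ∧ φ₀ t ≤ φ₀ T₀)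
    :
    ∃ δ > 0, ∃ lam₀ ≥ (1:ℝ), ∀ lam ≥ lam₀,
      ∀ v : ℝ → ℝ → ℝ, ContDiff ℝ (⊤ : ℕ∞) ↿v →
      (∀ t ∈ Icc 0 T, v t 0 = 0 ∧ v t 1 = 0 ∧ deriv (v t) 0 = 0 ∧ deriv (v t) 1 = 0) →
      δ * carlNormSq T lam (phiW β φ₀) (conjW β φ₀ lam v)
      ≤ Iw0 T σ (phiW β φ₀) lam (conjW β φ₀ lam v)
        + Iw1 T σ (phiW β φ₀) lam (conjW β φ₀ lam v)
        + Iw2 T σ (phiW β φ₀) lam (conjW β φ₀ lam v)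
        + Iw3 T σ (phiW β φ₀) lam (conjW β φ₀ lam v) := by
  classical
  -- maximum of β on [0,1]
  obtain ⟨xM, hxM, hxMle⟩ := isCompact_Icc.exists_isMaxOn
    (Set.nonempty_Icc.2 (by norm_num : (0:ℝ) ≤ 1)) hβ.continuous.continuousOn
  set M := β xM with hMdef
  have hrM : r ≤ M := (hβlow 0 (by norm_num [mem_Icc])).1.trans (hxMle (by norm_num [mem_Icc] : (0:ℝ) ∈ Icc (0:ℝ) 1))
  have hM0 : 0 < M := hr.trans_le hrM
  set δ := min (min (6*r^7*σ₀^2/M^7) (27*r^5*σ₀^2/M^5)) (min (48*r^3*σ₀^2/M^3) (r*σ₀^2/M))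
    with hδdef
  have hδpos : 0 < δ := by
    have hd0 : (0:ℝ) < 6*r^7*σ₀^2/M^7 := by positivity
    have hd1 : (0:ℝ) < 27*r^5*σ₀^2/M^5 := by positivity
    have hd2 : (0:ℝ) < 48*r^3*σ₀^2/M^3 := by positivity
    have hd3 : (0:ℝ) < r*σ₀^2/M := by positivity
    simp only [hδdef, lt_min_iff]
    exact ⟨⟨hd0, hd1⟩, hd2, hd3⟩
  refine ⟨δ, hδpos, max 1 (7/r), le_max_left _ _, ?_⟩
  intro lam hlam v hv hbc
  have hlam1 : (1:ℝ) ≤ lam := (le_max_left _ _).trans hlam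
  have hlam0 : (0:ℝ) < lam := lt_of_lt_of_le one_pos hlam1
  have hlamr : 7 ≤ lam * r := by
    have h7 : 7/r ≤ lam := (le_max_right _ _).trans hlam
    exact (div_le_iff₀ hr).1 h7
  have huv : ContDiff ℝ (⊤ : ℕ∞) (Function.uncurry v) := hv
  set c : ℝ → ℝ := fun t => (φ₀ t)⁻¹ with hcdef
  -- pointwise rewriting facts
  have hw0 : ∀ t x, conjW β φ₀ lam v t x = W0ex β v lam (c t) t x := by
    intro t x
    simp only [conjW, W0ex, Eex, phiW, hcdef]
    rw [show -lam * (β x / φ₀ t) = -(lam * (β x * (φ₀ t)⁻¹)) by rw [div_eq_mul_inv]; ring]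
  have hw0f : ∀ t, conjW β φ₀ lam v t = fun x => W0ex β v lam (c t) t x :=
    fun t => funext fun x => hw0 t x
  have hw1 : ∀ t x, deriv (conjW β φ₀ lam v t) x = W1ex β v lam (c t) t x := by
    intro t x; rw [hw0f t]; exact conj_deriv1 lam (c t) hβ huv t x
  have hw2 : ∀ t x, iteratedDeriv 2 (conjW β φ₀ lam v t) x = W2ex β v lam (c t) t x := by
    intro t x; rw [hw0f t]; exact conj_deriv2 lam (c t) hβ huv t x
  have hw3 : ∀ t x, iteratedDeriv 3 (conjW β φ₀ lam v t) x = W3ex β v lam (c t) t x := by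
    intro t x; rw [hw0f t]; exact conj_deriv3 lam (c t) hβ huv t x
  have hβdiff : Differentiable ℝ β := hβ.differentiable (by norm_num)
  have hβ1diff : Differentiable ℝ (deriv β) := (contDiff_deriv_beta hβ).differentiable (by norm_num)
  have hphi : ∀ t, phiW β φ₀ t = fun x => β x * c t :=
    fun t => funext fun x => by simp only [phiW, hcdef]; rw [div_eq_mul_inv]
  have hφx : ∀ t x, deriv (phiW β φ₀ t) x = deriv β x * c t := by
    intro t x; rw [hphi t]; exact deriv_mul_const (hβdiff x) _
  have hφxx : ∀ t x, iteratedDeriv 2 (phiW β φ₀ t) x = iteratedDeriv 2 β x * c t := by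
    intro t x
    rw [iteratedDeriv_succ, iteratedDeriv_one, hphi t]
    have h1 : deriv (fun y => β y * c t) = fun y => deriv β y * c t :=
      funext fun y => deriv_mul_const (hβdiff y) _
    rw [h1, itd2_eq]
    exact deriv_mul_const (hβ1diff x) _
  have hφ0 : ∀ t x, phiW β φ₀ t x = β x * c t := fun t x => by rw [hphi t]
  -- continuity of basic pieces
  have cβ1 : Continuous (deriv β) := (contDiff_deriv_beta hβ).continuous
  have cβ2 : Continuous (iteratedDeriv 2 β) := (contDiff_itd2_beta hβ).continuous
  have cβ3 : Continuous (iteratedDeriv 3 β) := continuous_itd3 hβ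
  have cσ0 : Continuous σ := hσ.continuous
  have cσ1 : Continuous (deriv σ) := (contDiff_deriv_beta hσ).continuous
  -- bound B on derivatives of β
  obtain ⟨B, hBb⟩ := isCompact_Icc.exists_bound_of_continuousOn
    (f := fun x => |deriv β x| + |iteratedDeriv 2 β x| + |iteratedDeriv 3 β x|)
    ((cβ1.abs.add cβ2.abs).add cβ3.abs).continuousOn
  have hBd : ∀ x ∈ Icc (0:ℝ) 1,
      |deriv β x| ≤ B ∧ |iteratedDeriv 2 β x| ≤ B ∧ |iteratedDeriv 3 β x| ≤ B := by
    intro x hx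
    have h := hBb x hx
    rw [Real.norm_eq_abs, abs_of_nonneg (by positivity)] at h
    refine ⟨by linarith [abs_nonneg (iteratedDeriv 2 β x), abs_nonneg (iteratedDeriv 3 β x)],
      by linarith [abs_nonneg (deriv β x), abs_nonneg (iteratedDeriv 3 β x)],
      by linarith [abs_nonneg (deriv β x), abs_nonneg (iteratedDeriv 2 β x)]⟩
  have hB0 : 0 ≤ B := (norm_nonneg _).trans (hBb 0 (by norm_num [mem_Icc]))
  -- bound CV on pdn of v over [0,T] × [0,1]
  obtain ⟨CV, hCVb⟩ := (isCompact_Icc.prod isCompact_Icc).exists_bound_of_continuousOn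
    (f := fun p : ℝ × ℝ => |pdn (Function.uncurry v) 0 p| + |pdn (Function.uncurry v) 1 p|
      + |pdn (Function.uncurry v) 2 p| + |pdn (Function.uncurry v) 3 p|)
    ((((pdn_contDiff huv 0).continuous.abs.add (pdn_contDiff huv 1).continuous.abs).add
      (pdn_contDiff huv 2).continuous.abs).add (pdn_contDiff huv 3).continuous.abs).continuousOn
  have hV : ∀ k ≤ 3, ∀ t ∈ Icc (0:ℝ) T, ∀ x ∈ Icc (0:ℝ) 1,
      |pdn (Function.uncurry v) k (t, x)| ≤ CV := by
    intro k hk t ht x hx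
    have h := hCVb (t, x) (mk_mem_prod ht hx)
    rw [Real.norm_eq_abs, abs_of_nonneg (by positivity)] at h
    interval_cases k
    · linarith [abs_nonneg (pdn (Function.uncurry v) 1 (t,x)),
        abs_nonneg (pdn (Function.uncurry v) 2 (t,x)), abs_nonneg (pdn (Function.uncurry v) 3 (t,x))]
    · linarith [abs_nonneg (pdn (Function.uncurry v) 0 (t,x)),
        abs_nonneg (pdn (Function.uncurry v) 2 (t,x)), abs_nonneg (pdn (Function.uncurry v) 3 (t,x))]
    · linarith [abs_nonneg (pdn (Function.uncurry v) 0 (t,x)),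
        abs_nonneg (pdn (Function.uncurry v) 1 (t,x)), abs_nonneg (pdn (Function.uncurry v) 3 (t,x))]
    · linarith [abs_nonneg (pdn (Function.uncurry v) 0 (t,x)),
        abs_nonneg (pdn (Function.uncurry v) 1 (t,x)), abs_nonneg (pdn (Function.uncurry v) 2 (t,x))]
  have hCV0 : 0 ≤ CV := (norm_nonneg _).trans
    (hCVb (0, 0) (mk_mem_prod (by constructor <;> norm_num [hT.le]) (by norm_num [mem_Icc])))
  -- coefficient functions and their bound CF
  set co0 : ℝ → ℝ := fun x => (deriv β x)^6*(iteratedDeriv 2 β x)*(σ x)^2 with hco0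
  set co1 : ℝ → ℝ := fun x => (deriv β x)^4*(σ x)*(30*(iteratedDeriv 2 β x)*(σ x)
    + 12*(deriv β x)*(deriv σ x)) with hco1
  set co2 : ℝ → ℝ := fun x => (deriv β x)^2*(σ x)*(58*(iteratedDeriv 2 β x)*(σ x)
    + 40*(deriv β x)*(deriv σ x)) with hco2
  set co3 : ℝ → ℝ := fun x => (σ x)*(2*(iteratedDeriv 2 β x)*(σ x)
    - 4*(deriv β x)*(deriv σ x)) with hco3
  obtain ⟨CF, hCFb⟩ := isCompact_Icc.exists_bound_of_continuousOn
    (f := fun x => |co0 x| + |co1 x| + |co2 x| + |co3 x|)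
    (by
      have c0 : Continuous co0 := by rw [hco0]; exact ((cβ1.pow 6).mul cβ2).mul (cσ0.pow 2)
      have c1 : Continuous co1 := by
        rw [hco1]
        exact ((cβ1.pow 4).mul cσ0).mul
          (((continuous_const.mul cβ2).mul cσ0).add ((continuous_const.mul cβ1).mul cσ1))
      have c2 : Continuous co2 := by
        rw [hco2]
        exact ((cβ1.pow 2).mul cσ0).mul
          (((continuous_const.mul cβ2).mul cσ0).add ((continuous_const.mul cβ1).mul cσ1))
      have c3 : Continuous co3 := by
        rw [hco3]
        exact cσ0.mul
          (((continuous_const.mul cβ2).mul cσ0).sub ((continuous_const.mul cβ1).mul cσ1))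
      exact (((c0.abs.add c1.abs).add c2.abs).add c3.abs).continuousOn)
  have hCF : ∀ x ∈ Icc (0:ℝ) 1, |co0 x| ≤ CF ∧ |co1 x| ≤ CF ∧ |co2 x| ≤ CF ∧ |co3 x| ≤ CF := by
    intro x hx
    have h := hCFb x hx
    rw [Real.norm_eq_abs, abs_of_nonneg (by positivity)] at h
    refine ⟨by linarith [abs_nonneg (co1 x), abs_nonneg (co2 x), abs_nonneg (co3 x)],
      by linarith [abs_nonneg (co0 x), abs_nonneg (co2 x), abs_nonneg (co3 x)],
      by linarith [abs_nonneg (co0 x), abs_nonneg (co1 x), abs_nonneg (co3 x)],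
      by linarith [abs_nonneg (co0 x), abs_nonneg (co1 x), abs_nonneg (co2 x)]⟩
  -- the uniform bound on the conjugated derivatives
  set CW := 7*CV*(1+lam*B)^3 with hCWdef
  have hWbd : ∀ t ∈ Ioo 0 T, ∀ x ∈ Icc (0:ℝ) 1,
      |W0ex β v lam (c t) t x| ≤ CW*(1+c t)^3*Real.exp (-(lam*(r*c t))) ∧
      |W1ex β v lam (c t) t x| ≤ CW*(1+c t)^3*Real.exp (-(lam*(r*c t))) ∧
      |W2ex β v lam (c t) t x| ≤ CW*(1+c t)^3*Real.exp (-(lam*(r*c t))) ∧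
      |W3ex β v lam (c t) t x| ≤ CW*(1+c t)^3*Real.exp (-(lam*(r*c t))) := by
    intro t ht x hx
    have hct : 0 < c t := by
      rw [hcdef]; exact inv_pos.2 (hφ₀pos t ht).1
    have hE0 : 0 ≤ Eex β lam (c t) x := (Real.exp_pos _).le
    have hEb : Eex β lam (c t) x ≤ Real.exp (-(lam*(r*c t))) := by
      apply Real.exp_le_exp.2
      have hrb : r ≤ β x := (hβlow x hx).1
      nlinarith [mul_nonneg (mul_nonneg hlam0.le hct.le) (sub_nonneg.2 hrb)]
    have hm0 : 0 ≤ lam*(B*c t) := by positivity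
    have ha0 : |A0 β lam (c t) x| ≤ lam*(B*c t) := by
      simp only [A0, abs_neg, abs_mul]
      rw [abs_of_pos hlam0, abs_of_pos hct]
      exact mul_le_mul_of_nonneg_left
        (mul_le_mul_of_nonneg_right (hBd x hx).1 hct.le) hlam0.le
    have ha1 : |A1 β lam (c t) x| ≤ lam*(B*c t) := by
      simp only [A1, abs_neg, abs_mul]
      rw [abs_of_pos hlam0, abs_of_pos hct]
      exact mul_le_mul_of_nonneg_left
        (mul_le_mul_of_nonneg_right (hBd x hx).2.1 hct.le) hlam0.le
    have ha2 : |A2 β lam (c t) x| ≤ lam*(B*c t) := by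
      simp only [A2, abs_neg, abs_mul]
      rw [abs_of_pos hlam0, abs_of_pos hct]
      exact mul_le_mul_of_nonneg_left
        (mul_le_mul_of_nonneg_right (hBd x hx).2.2 hct.le) hlam0.le
    have hmle : 1 + lam*(B*c t) ≤ (1+lam*B)*(1+c t) := by
      nlinarith [mul_nonneg hlam0.le hB0, hct.le]
    have hlamB : 0 ≤ lam*B := mul_nonneg hlam0.le hB0
    have htI : t ∈ Icc (0:ℝ) T := Ioo_subset_Icc_self ht
    have hV0 : |v t x| ≤ CV := hV 0 (by norm_num) t htI x hx
    have hV1 : |pdn (Function.uncurry v) 1 (t, x)| ≤ CV := hV 1 (by norm_num) t htI x hx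
    have hV2 : |pdn (Function.uncurry v) 2 (t, x)| ≤ CV := hV 2 (by norm_num) t htI x hx
    have hV3 : |pdn (Function.uncurry v) 3 (t, x)| ≤ CV := hV 3 (by norm_num) t htI x hx
    exact ⟨wchain hE0 hEb (Real.exp_pos _).le (combo_bound0 hCV0 hm0 hV0) hm0 hmle hct.le hlamB hCV0,
      wchain hE0 hEb (Real.exp_pos _).le (combo_bound1 hCV0 hm0 hV0 hV1 ha0) hm0 hmle hct.le hlamB hCV0,
      wchain hE0 hEb (Real.exp_pos _).le (combo_bound2 hCV0 hm0 hV0 hV1 hV2 ha0 ha1) hm0 hmle hct.le hlamB hCV0,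
      wchain hE0 hEb (Real.exp_pos _).le (combo_bound3 hCV0 hm0 hV0 hV1 hV2 hV3 ha0 ha1 ha2) hm0 hmle hct.le hlamB hCV0⟩
  -- explicit densities
  set g0 : ℝ → ℝ → ℝ := fun t x => (deriv β x * c t)^6*(iteratedDeriv 2 β x * c t)*(σ x)^2
    *(W0ex β v lam (c t) t x)^2 with hg0
  set g1 : ℝ → ℝ → ℝ := fun t x => (deriv β x * c t)^4*(σ x)*(30*(iteratedDeriv 2 β x * c t)*(σ x)
    + 12*(deriv β x * c t)*(deriv σ x))*(W1ex β v lam (c t) t x)^2 with hg1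
  set g2 : ℝ → ℝ → ℝ := fun t x => (deriv β x * c t)^2*(σ x)*(58*(iteratedDeriv 2 β x * c t)*(σ x)
    + 40*(deriv β x * c t)*(deriv σ x))*(W2ex β v lam (c t) t x)^2 with hg2
  set g3 : ℝ → ℝ → ℝ := fun t x => (σ x)*(2*(iteratedDeriv 2 β x * c t)*(σ x)
    - 4*(deriv β x * c t)*(deriv σ x))*(W3ex β v lam (c t) t x)^2 with hg3
  set gN : ℝ → ℝ → ℝ := fun t x => lam^7*(β x * c t)^7*(W0ex β v lam (c t) t x)^2
    + lam^5*(β x * c t)^5*(W1ex β v lam (c t) t x)^2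
    + lam^3*(β x * c t)^3*(W2ex β v lam (c t) t x)^2
    + lam*(β x * c t)*(W3ex β v lam (c t) t x)^2 with hgN
  have hIw0eq : Iw0 T σ (phiW β φ₀) lam (conjW β φ₀ lam v)
      = -6*lam^7 * ∫ t in Ioo (0:ℝ) T, ∫ x in Ioo (0:ℝ) 1, g0 t x := by
    unfold Iw0; simp only [hφx, hφxx, hw0, hg0]
  have hIw1eq : Iw1 T σ (phiW β φ₀) lam (conjW β φ₀ lam v)
      = -lam^5 * ∫ t in Ioo (0:ℝ) T, ∫ x in Ioo (0:ℝ) 1, g1 t x := by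
    unfold Iw1; simp only [hφx, hφxx, hw1, hg1]
  have hIw2eq : Iw2 T σ (phiW β φ₀) lam (conjW β φ₀ lam v)
      = -lam^3 * ∫ t in Ioo (0:ℝ) T, ∫ x in Ioo (0:ℝ) 1, g2 t x := by
    unfold Iw2; simp only [hφx, hφxx, hw2, hg2]
  have hIw3eq : Iw3 T σ (phiW β φ₀) lam (conjW β φ₀ lam v)
      = -lam * ∫ t in Ioo (0:ℝ) T, ∫ x in Ioo (0:ℝ) 1, g3 t x := by
    unfold Iw3; simp only [hφx, hφxx, hw3, hg3]
  have hNormeq : carlNormSq T lam (phiW β φ₀) (conjW β φ₀ lam v)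
      = ∫ t in Ioo (0:ℝ) T, ∫ x in Ioo (0:ℝ) 1, gN t x := by
    unfold carlNormSq; simp only [hφ0, hw0, hw1, hw2, hw3, hgN]
  -- continuity of densities in x (t fixed)
  have hWxc : ∀ t, Continuous (fun x => W0ex β v lam (c t) t x) ∧
      Continuous (fun x => W1ex β v lam (c t) t x) ∧
      Continuous (fun x => W2ex β v lam (c t) t x) ∧
      Continuous (fun x => W3ex β v lam (c t) t x) := by
    intro t
    have hcomp : Continuous (fun x : ℝ => ((c t : ℝ), (t, x))) :=
      continuous_const.prodMk (continuous_const.prodMk continuous_id)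
    refine ⟨?_, ?_, ?_, ?_⟩
    · have h2 := (continuous_W0ex_full lam hβ huv).comp hcomp
      exact h2
    · have h2 := (continuous_W1ex_full lam hβ huv).comp hcomp
      exact h2
    · have h2 := (continuous_W2ex_full lam hβ huv).comp hcomp
      exact h2
    · have h2 := (continuous_W3ex_full lam hβ huv).comp hcomp
      exact h2
  have hgxc : ∀ t, Continuous (g0 t) ∧ Continuous (g1 t) ∧ Continuous (g2 t)
      ∧ Continuous (g3 t) ∧ Continuous (gN t) := by
    intro t
    obtain ⟨hc0, hc1, hc2, hc3⟩ := hWxc t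
    refine ⟨?_, ?_, ?_, ?_, ?_⟩
    · rw [hg0]
      exact ((((cβ1.mul continuous_const).pow 6).mul (cβ2.mul continuous_const)).mul
        (cσ0.pow 2)).mul (hc0.pow 2)
    · rw [hg1]
      exact ((((cβ1.mul continuous_const).pow 4).mul cσ0).mul
        (((continuous_const.mul (cβ2.mul continuous_const)).mul cσ0).add
          ((continuous_const.mul (cβ1.mul continuous_const)).mul cσ1))).mul (hc1.pow 2)
    · rw [hg2]
      exact ((((cβ1.mul continuous_const).pow 2).mul cσ0).mul
        (((continuous_const.mul (cβ2.mul continuous_const)).mul cσ0).add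
          ((continuous_const.mul (cβ1.mul continuous_const)).mul cσ1))).mul (hc2.pow 2)
    · rw [hg3]
      exact (cσ0.mul
        (((continuous_const.mul (cβ2.mul continuous_const)).mul cσ0).sub
          ((continuous_const.mul (cβ1.mul continuous_const)).mul cσ1))).mul (hc3.pow 2)
    · rw [hgN]
      refine (((?_ : Continuous fun x => lam^7*(β x * c t)^7*(W0ex β v lam (c t) t x)^2).add
        ?_).add ?_).add ?_
      · exact (continuous_const.mul ((hβ.continuous.mul continuous_const).pow 7)).mul (hc0.pow 2)
      · exact (continuous_const.mul ((hβ.continuous.mul continuous_const).pow 5)).mul (hc1.pow 2)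
      · exact (continuous_const.mul ((hβ.continuous.mul continuous_const).pow 3)).mul (hc2.pow 2)
      · exact (continuous_const.mul (hβ.continuous.mul continuous_const)).mul (hc3.pow 2)
  -- continuity of densities in t (x fixed)
  have hgtc : ∀ x ∈ Ioo (0:ℝ) 1, ∀ t₀ ∈ Ioo 0 T,
      ContinuousAt (fun t => g0 t x) t₀ ∧ ContinuousAt (fun t => g1 t x) t₀ ∧
      ContinuousAt (fun t => g2 t x) t₀ ∧ ContinuousAt (fun t => g3 t x) t₀ := by
    intro x _ t₀ ht₀
    have hcA : ContinuousAt c t₀ := by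
      rw [hcdef]
      exact (hφ₀.continuous.continuousAt).inv₀ (ne_of_gt (hφ₀pos t₀ ht₀).1)
    have hpair : ContinuousAt (fun t => ((c t : ℝ), (t, x))) t₀ :=
      hcA.prodMk (continuousAt_id.prodMk continuousAt_const)
    have hW0t : ContinuousAt (fun t => W0ex β v lam (c t) t x) t₀ := by
      have h2 := ((continuous_W0ex_full lam hβ huv).continuousAt).comp hpair
      exact h2
    have hW1t : ContinuousAt (fun t => W1ex β v lam (c t) t x) t₀ := by
      have h2 := ((continuous_W1ex_full lam hβ huv).continuousAt).comp hpair
      exact h2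
    have hW2t : ContinuousAt (fun t => W2ex β v lam (c t) t x) t₀ := by
      have h2 := ((continuous_W2ex_full lam hβ huv).continuousAt).comp hpair
      exact h2
    have hW3t : ContinuousAt (fun t => W3ex β v lam (c t) t x) t₀ := by
      have h2 := ((continuous_W3ex_full lam hβ huv).continuousAt).comp hpair
      exact h2
    refine ⟨?_, ?_, ?_, ?_⟩
    · rw [hg0]
      exact ((((continuous_const.continuousAt.mul hcA).pow 6).mul
        (continuous_const.continuousAt.mul hcA)).mul continuous_const.continuousAt).mul
        (hW0t.pow 2)
    · rw [hg1]
      exact ((((continuous_const.continuousAt.mul hcA).pow 4).mul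
        continuous_const.continuousAt).mul
        (((continuousAt_const.mul (continuous_const.continuousAt.mul hcA)).mul
          continuousAt_const).add
          ((continuousAt_const.mul (continuous_const.continuousAt.mul hcA)).mul
          continuousAt_const))).mul (hW1t.pow 2)
    · rw [hg2]
      exact ((((continuous_const.continuousAt.mul hcA).pow 2).mul
        continuous_const.continuousAt).mul
        (((continuousAt_const.mul (continuous_const.continuousAt.mul hcA)).mul
          continuousAt_const).add
          ((continuousAt_const.mul (continuous_const.continuousAt.mul hcA)).mul
          continuousAt_const))).mul (hW2t.pow 2)
    · rw [hg3]
      exact (continuousAt_const.mul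
        (((continuousAt_const.mul (continuous_const.continuousAt.mul hcA)).mul
          continuousAt_const).sub
          ((continuousAt_const.mul (continuous_const.continuousAt.mul hcA)).mul
          continuousAt_const))).mul (hW3t.pow 2)
  -- uniform bounds on the densities
  have hgbd : ∀ t ∈ Ioo 0 T, ∀ x ∈ Ioo (0:ℝ) 1,
      |g0 t x| ≤ CF*CW^2 ∧ |g1 t x| ≤ CF*CW^2 ∧ |g2 t x| ≤ CF*CW^2 ∧ |g3 t x| ≤ CF*CW^2 := by
    intro t ht x hx
    have hxI : x ∈ Icc (0:ℝ) 1 := Ioo_subset_Icc_self hx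
    have hct : 0 < c t := by
      rw [hcdef]; exact inv_pos.2 (hφ₀pos t ht).1
    obtain ⟨hW0, hW1, hW2, hW3⟩ := hWbd t ht x hxI
    obtain ⟨hF0, hF1, hF2, hF3⟩ := hCF x hxI
    refine ⟨?_, ?_, ?_, ?_⟩
    · rw [show g0 t x = co0 x * (c t)^7 * (W0ex β v lam (c t) t x)^2 from by
        rw [hg0, hco0]; ring]
      exact dens_bound_gen 7 (by norm_num) hct hlamr hF0 hW0
    · rw [show g1 t x = co1 x * (c t)^5 * (W1ex β v lam (c t) t x)^2 from by
        rw [hg1, hco1]; ring]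
      exact dens_bound_gen 5 (by norm_num) hct hlamr hF1 hW1
    · rw [show g2 t x = co2 x * (c t)^3 * (W2ex β v lam (c t) t x)^2 from by
        rw [hg2, hco2]; ring]
      exact dens_bound_gen 3 (by norm_num) hct hlamr hF2 hW2
    · rw [show g3 t x = co3 x * (c t)^1 * (W3ex β v lam (c t) t x)^2 from by
        rw [hg3, hco3]; ring]
      exact dens_bound_gen 1 (by norm_num) hct hlamr hF3 hW3
  -- integrability of the inner integrals
  have hInt0 : IntegrableOn (fun t => ∫ x in Ioo (0:ℝ) 1, g0 t x) (Ioo 0 T) :=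
    key_term hT g0 (fun t _ => ((hgxc t).1).continuousOn)
      (fun x hx t₀ ht₀ => (hgtc x hx t₀ ht₀).1)
      (fun t ht x hx => (hgbd t ht x hx).1)
  have hInt1 : IntegrableOn (fun t => ∫ x in Ioo (0:ℝ) 1, g1 t x) (Ioo 0 T) :=
    key_term hT g1 (fun t _ => ((hgxc t).2.1).continuousOn)
      (fun x hx t₀ ht₀ => (hgtc x hx t₀ ht₀).2.1)
      (fun t ht x hx => (hgbd t ht x hx).2.1)
  have hInt2 : IntegrableOn (fun t => ∫ x in Ioo (0:ℝ) 1, g2 t x) (Ioo 0 T) :=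
    key_term hT g2 (fun t _ => ((hgxc t).2.2.1).continuousOn)
      (fun x hx t₀ ht₀ => (hgtc x hx t₀ ht₀).2.2.1)
      (fun t ht x hx => (hgbd t ht x hx).2.2.1)
  have hInt3 : IntegrableOn (fun t => ∫ x in Ioo (0:ℝ) 1, g3 t x) (Ioo 0 T) :=
    key_term hT g3 (fun t _ => ((hgxc t).2.2.2.1).continuousOn)
      (fun x hx t₀ ht₀ => (hgtc x hx t₀ ht₀).2.2.2)
      (fun t ht x hx => (hgbd t ht x hx).2.2.2)
  -- pointwise comparison of densities
  have hpt : ∀ t ∈ Ioo 0 T, ∀ x ∈ Ioo (0:ℝ) 1,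
      δ * gN t x ≤ (-6*lam^7)*g0 t x + (-lam^5)*g1 t x + (-lam^3)*g2 t x + (-lam)*g3 t x := by
    intro t ht x hx
    have hxI : x ∈ Icc (0:ℝ) 1 := Ioo_subset_Icc_self hx
    obtain ⟨hb, hb1, hb2⟩ := hβlow x hxI
    have hs := hσpos x hxI
    have hs0 : 0 < σ x := hσ₀.trans_le hs
    have hβσx : |deriv σ x * deriv β x| ≤ r/4*σ x := hβσ x hxI x hxI
    have hct : 0 < c t := by rw [hcdef]; exact inv_pos.2 (hφ₀pos t ht).1
    have hbM : β x ≤ M := hxMle hxI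
    have hb0 : 0 < β x := hr.trans_le hb
    have hb10 : 0 < deriv β x := hr.trans_le hb1
    have hδ0 : δ ≤ 6*r^7*σ₀^2/M^7 := (min_le_left _ _).trans (min_le_left _ _)
    have hδ1 : δ ≤ 27*r^5*σ₀^2/M^5 := (min_le_left _ _).trans (min_le_right _ _)
    have hδ2 : δ ≤ 48*r^3*σ₀^2/M^3 := (min_le_right _ _).trans (min_le_left _ _)
    have hδ3 : δ ≤ r*σ₀^2/M := (min_le_right _ _).trans (min_le_right _ _)
    have hδM0 : δ*M^7 ≤ 6*r^7*σ₀^2 := (le_div_iff₀ (by positivity)).1 hδ0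
    have hδM1 : δ*M^5 ≤ 27*r^5*σ₀^2 := (le_div_iff₀ (by positivity)).1 hδ1
    have hδM2 : δ*M^3 ≤ 48*r^3*σ₀^2 := (le_div_iff₀ (by positivity)).1 hδ2
    have hδM3 : δ*M ≤ r*σ₀^2 := (le_div_iff₀ hM0).1 hδ3
    have hsq : σ₀^2 ≤ (σ x)^2 := pow_le_pow_left₀ hσ₀.le hs 2
    have e1 : (iteratedDeriv 2 β x)*(σ x) ≤ (-r)*(σ x) :=
      mul_le_mul_of_nonneg_right hb2 hs0.le
    have e2 : deriv σ x * deriv β x ≤ r/4*σ x := (le_abs_self _).trans hβσx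
    have e3 : -(r/4*σ x) ≤ deriv σ x * deriv β x := by
      have := neg_abs_le (deriv σ x * deriv β x)
      linarith
    have core0 : δ * (β x)^7 ≤ 6*((deriv β x)^6*(-(iteratedDeriv 2 β x))*(σ x)^2) := by
      have h2 : (β x)^7 ≤ M^7 := pow_le_pow_left₀ hb0.le hbM 7
      have h4 : r^6*r*σ₀^2 ≤ (deriv β x)^6*(-(iteratedDeriv 2 β x))*(σ x)^2 :=
        mul3_mono (by positivity) hr.le (by positivity)
          (pow_le_pow_left₀ hr.le hb1 6) (by linarith) hsq
      have hA : δ*(β x)^7 ≤ δ*M^7 := mul_le_mul_of_nonneg_left h2 hδpos.le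
      have he : 6*r^7*σ₀^2 = 6*(r^6*r*σ₀^2) := by ring
      linarith [hA, hδM0, h4]
    have hrs : r*σ₀ ≤ r*σ x := mul_le_mul_of_nonneg_left hs hr.le
    have hX1' : 27*(r*σ₀) ≤ -(30*(iteratedDeriv 2 β x)*(σ x) + 12*(deriv β x)*(deriv σ x)) := by
      linarith
    have core1 : δ*(β x)^5 ≤ (deriv β x)^4*(σ x)
        *(-(30*(iteratedDeriv 2 β x)*(σ x) + 12*(deriv β x)*(deriv σ x))) := by
      have h2 : (β x)^5 ≤ M^5 := pow_le_pow_left₀ hb0.le hbM 5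
      have h4 : r^4*σ₀*(27*(r*σ₀)) ≤ (deriv β x)^4*(σ x)
          *(-(30*(iteratedDeriv 2 β x)*(σ x) + 12*(deriv β x)*(deriv σ x))) :=
        mul3_mono (by positivity) hσ₀.le (by positivity)
          (pow_le_pow_left₀ hr.le hb1 4) hs hX1'
      have hA : δ*(β x)^5 ≤ δ*M^5 := mul_le_mul_of_nonneg_left h2 hδpos.le
      have he : 27*r^5*σ₀^2 = r^4*σ₀*(27*(r*σ₀)) := by ring
      linarith [hA, hδM1, h4]
    have hX2' : 48*(r*σ₀) ≤ -(58*(iteratedDeriv 2 β x)*(σ x) + 40*(deriv β x)*(deriv σ x)) := by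
      linarith
    have core2 : δ*(β x)^3 ≤ (deriv β x)^2*(σ x)
        *(-(58*(iteratedDeriv 2 β x)*(σ x) + 40*(deriv β x)*(deriv σ x))) := by
      have h2 : (β x)^3 ≤ M^3 := pow_le_pow_left₀ hb0.le hbM 3
      have h4 : r^2*σ₀*(48*(r*σ₀)) ≤ (deriv β x)^2*(σ x)
          *(-(58*(iteratedDeriv 2 β x)*(σ x) + 40*(deriv β x)*(deriv σ x))) :=
        mul3_mono (by positivity) hσ₀.le (by positivity)
          (pow_le_pow_left₀ hr.le hb1 2) hs hX2'
      have hA : δ*(β x)^3 ≤ δ*M^3 := mul_le_mul_of_nonneg_left h2 hδpos.le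
      have he : 48*r^3*σ₀^2 = r^2*σ₀*(48*(r*σ₀)) := by ring
      linarith [hA, hδM2, h4]
    have hX3' : r*σ₀ ≤ -(2*(iteratedDeriv 2 β x)*(σ x) - 4*(deriv β x)*(deriv σ x)) := by
      linarith
    have core3 : δ*(β x) ≤ (σ x)*(-(2*(iteratedDeriv 2 β x)*(σ x) - 4*(deriv β x)*(deriv σ x))) := by
      have h4 : σ₀*(r*σ₀) ≤ (σ x)*(-(2*(iteratedDeriv 2 β x)*(σ x) - 4*(deriv β x)*(deriv σ x))) :=
        mul_le_mul hs hX3' (by positivity) hs0.le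
      have hA : δ*(β x) ≤ δ*M := mul_le_mul_of_nonneg_left hbM hδpos.le
      have he : r*σ₀^2 = σ₀*(r*σ₀) := by ring
      linarith [hA, hδM3, h4]
    have l0 : δ*(lam^7*(β x * c t)^7*(W0ex β v lam (c t) t x)^2)
        ≤ (-6*lam^7)*((deriv β x * c t)^6*(iteratedDeriv 2 β x * c t)*(σ x)^2
          *(W0ex β v lam (c t) t x)^2) := by
      calc δ*(lam^7*(β x * c t)^7*(W0ex β v lam (c t) t x)^2)
          = (δ*(β x)^7) * (lam^7*(c t)^7*(W0ex β v lam (c t) t x)^2) := by ring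
        _ ≤ (6*((deriv β x)^6*(-(iteratedDeriv 2 β x))*(σ x)^2))
            * (lam^7*(c t)^7*(W0ex β v lam (c t) t x)^2) :=
            mul_le_mul_of_nonneg_right core0 (by positivity)
        _ = (-6*lam^7)*((deriv β x * c t)^6*(iteratedDeriv 2 β x * c t)*(σ x)^2
            *(W0ex β v lam (c t) t x)^2) := by ring
    have l1 : δ*(lam^5*(β x * c t)^5*(W1ex β v lam (c t) t x)^2)
        ≤ (-lam^5)*((deriv β x * c t)^4*(σ x)*(30*(iteratedDeriv 2 β x * c t)*(σ x)
          + 12*(deriv β x * c t)*(deriv σ x))*(W1ex β v lam (c t) t x)^2) := by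
      calc δ*(lam^5*(β x * c t)^5*(W1ex β v lam (c t) t x)^2)
          = (δ*(β x)^5) * (lam^5*(c t)^5*(W1ex β v lam (c t) t x)^2) := by ring
        _ ≤ ((deriv β x)^4*(σ x)*(-(30*(iteratedDeriv 2 β x)*(σ x)
            + 12*(deriv β x)*(deriv σ x)))) * (lam^5*(c t)^5*(W1ex β v lam (c t) t x)^2) :=
            mul_le_mul_of_nonneg_right core1 (by positivity)
        _ = (-lam^5)*((deriv β x * c t)^4*(σ x)*(30*(iteratedDeriv 2 β x * c t)*(σ x)
            + 12*(deriv β x * c t)*(deriv σ x))*(W1ex β v lam (c t) t x)^2) := by ring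
    have l2 : δ*(lam^3*(β x * c t)^3*(W2ex β v lam (c t) t x)^2)
        ≤ (-lam^3)*((deriv β x * c t)^2*(σ x)*(58*(iteratedDeriv 2 β x * c t)*(σ x)
          + 40*(deriv β x * c t)*(deriv σ x))*(W2ex β v lam (c t) t x)^2) := by
      calc δ*(lam^3*(β x * c t)^3*(W2ex β v lam (c t) t x)^2)
          = (δ*(β x)^3) * (lam^3*(c t)^3*(W2ex β v lam (c t) t x)^2) := by ring
        _ ≤ ((deriv β x)^2*(σ x)*(-(58*(iteratedDeriv 2 β x)*(σ x)
            + 40*(deriv β x)*(deriv σ x)))) * (lam^3*(c t)^3*(W2ex β v lam (c t) t x)^2) :=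
            mul_le_mul_of_nonneg_right core2 (by positivity)
        _ = (-lam^3)*((deriv β x * c t)^2*(σ x)*(58*(iteratedDeriv 2 β x * c t)*(σ x)
            + 40*(deriv β x * c t)*(deriv σ x))*(W2ex β v lam (c t) t x)^2) := by ring
    have l3 : δ*(lam*(β x * c t)*(W3ex β v lam (c t) t x)^2)
        ≤ (-lam)*((σ x)*(2*(iteratedDeriv 2 β x * c t)*(σ x)
          - 4*(deriv β x * c t)*(deriv σ x))*(W3ex β v lam (c t) t x)^2) := by
      calc δ*(lam*(β x * c t)*(W3ex β v lam (c t) t x)^2)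
          = (δ*(β x)) * (lam*(c t)*(W3ex β v lam (c t) t x)^2) := by ring
        _ ≤ ((σ x)*(-(2*(iteratedDeriv 2 β x)*(σ x) - 4*(deriv β x)*(deriv σ x))))
            * (lam*(c t)*(W3ex β v lam (c t) t x)^2) :=
            mul_le_mul_of_nonneg_right core3 (by positivity)
        _ = (-lam)*((σ x)*(2*(iteratedDeriv 2 β x * c t)*(σ x)
            - 4*(deriv β x * c t)*(deriv σ x))*(W3ex β v lam (c t) t x)^2) := by ring
    simp only [hg0, hg1, hg2, hg3, hgN]
    have hexp : δ * (lam^7*(β x * c t)^7*(W0ex β v lam (c t) t x)^2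
        + lam^5*(β x * c t)^5*(W1ex β v lam (c t) t x)^2
        + lam^3*(β x * c t)^3*(W2ex β v lam (c t) t x)^2
        + lam*(β x * c t)*(W3ex β v lam (c t) t x)^2)
        = δ*(lam^7*(β x * c t)^7*(W0ex β v lam (c t) t x)^2)
        + δ*(lam^5*(β x * c t)^5*(W1ex β v lam (c t) t x)^2)
        + δ*(lam^3*(β x * c t)^3*(W2ex β v lam (c t) t x)^2)
        + δ*(lam*(β x * c t)*(W3ex β v lam (c t) t x)^2) := by ring
    rw [hexp]
    exact add_le_add (add_le_add (add_le_add l0 l1) l2) l3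
  -- inner integrability over x
  have hIntInner : ∀ t, IntegrableOn (g0 t) (Ioo 0 1) ∧ IntegrableOn (g1 t) (Ioo 0 1) ∧
      IntegrableOn (g2 t) (Ioo 0 1) ∧ IntegrableOn (g3 t) (Ioo 0 1) ∧
      IntegrableOn (gN t) (Ioo 0 1) := by
    intro t
    obtain ⟨h0', h1', h2', h3', hN'⟩ := hgxc t
    exact ⟨(h0'.integrableOn_Icc).mono_set Ioo_subset_Icc_self,
      (h1'.integrableOn_Icc).mono_set Ioo_subset_Icc_self,
      (h2'.integrableOn_Icc).mono_set Ioo_subset_Icc_self,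
      (h3'.integrableOn_Icc).mono_set Ioo_subset_Icc_self,
      (hN'.integrableOn_Icc).mono_set Ioo_subset_Icc_self⟩
  have hInner : ∀ t ∈ Ioo 0 T,
      δ * ∫ x in Ioo (0:ℝ) 1, gN t x
        ≤ (-6*lam^7) * (∫ x in Ioo (0:ℝ) 1, g0 t x) + (-lam^5) * (∫ x in Ioo (0:ℝ) 1, g1 t x)
          + (-lam^3) * (∫ x in Ioo (0:ℝ) 1, g2 t x) + (-lam) * (∫ x in Ioo (0:ℝ) 1, g3 t x) := by
    intro t ht
    obtain ⟨h0', h1', h2', h3', hN'⟩ := hIntInner t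
    have i0 : IntegrableOn (fun x => (-6*lam^7)*g0 t x) (Ioo 0 1) := h0'.const_mul _
    have i1 : IntegrableOn (fun x => (-lam^5)*g1 t x) (Ioo 0 1) := h1'.const_mul _
    have i2 : IntegrableOn (fun x => (-lam^3)*g2 t x) (Ioo 0 1) := h2'.const_mul _
    have i3 : IntegrableOn (fun x => (-lam)*g3 t x) (Ioo 0 1) := h3'.const_mul _
    have i01 : IntegrableOn (fun x => (-6*lam^7)*g0 t x + (-lam^5)*g1 t x) (Ioo 0 1) := i0.add i1
    have i012 : IntegrableOn (fun x => (-6*lam^7)*g0 t x + (-lam^5)*g1 t x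
        + (-lam^3)*g2 t x) (Ioo 0 1) := i01.add i2
    have hmono : (∫ x in Ioo (0:ℝ) 1, δ * gN t x)
        ≤ ∫ x in Ioo (0:ℝ) 1, ((-6*lam^7)*g0 t x + (-lam^5)*g1 t x + (-lam^3)*g2 t x
          + (-lam)*g3 t x) := setIntegral_mono_on (hN'.const_mul δ)
      (i012.add i3) measurableSet_Ioo (fun x hx => hpt t ht x hx)
    have eC : ∫ x in Ioo (0:ℝ) 1, ((-6*lam^7)*g0 t x + (-lam^5)*g1 t x + (-lam^3)*g2 t x
          + (-lam)*g3 t x)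
        = (∫ x in Ioo (0:ℝ) 1, ((-6*lam^7)*g0 t x + (-lam^5)*g1 t x + (-lam^3)*g2 t x))
          + ∫ x in Ioo (0:ℝ) 1, (-lam)*g3 t x := integral_add i012 i3
    have eB : ∫ x in Ioo (0:ℝ) 1, ((-6*lam^7)*g0 t x + (-lam^5)*g1 t x + (-lam^3)*g2 t x)
        = (∫ x in Ioo (0:ℝ) 1, ((-6*lam^7)*g0 t x + (-lam^5)*g1 t x))
          + ∫ x in Ioo (0:ℝ) 1, (-lam^3)*g2 t x := integral_add i01 i2
    have eA : ∫ x in Ioo (0:ℝ) 1, ((-6*lam^7)*g0 t x + (-lam^5)*g1 t x)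
        = (∫ x in Ioo (0:ℝ) 1, (-6*lam^7)*g0 t x)
          + ∫ x in Ioo (0:ℝ) 1, (-lam^5)*g1 t x := integral_add i0 i1
    have e0m : ∫ x in Ioo (0:ℝ) 1, (-6*lam^7)*g0 t x
        = (-6*lam^7) * ∫ x in Ioo (0:ℝ) 1, g0 t x := integral_const_mul _ _
    have e1m : ∫ x in Ioo (0:ℝ) 1, (-lam^5)*g1 t x
        = (-lam^5) * ∫ x in Ioo (0:ℝ) 1, g1 t x := integral_const_mul _ _
    have e2m : ∫ x in Ioo (0:ℝ) 1, (-lam^3)*g2 t x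
        = (-lam^3) * ∫ x in Ioo (0:ℝ) 1, g2 t x := integral_const_mul _ _
    have e3m : ∫ x in Ioo (0:ℝ) 1, (-lam)*g3 t x
        = (-lam) * ∫ x in Ioo (0:ℝ) 1, g3 t x := integral_const_mul _ _
    have eL : ∫ x in Ioo (0:ℝ) 1, δ * gN t x
        = δ * ∫ x in Ioo (0:ℝ) 1, gN t x := integral_const_mul _ _
    linarith [hmono, eC, eB, eA, e0m, e1m, e2m, e3m, eL]
  -- assembly
  rw [hIw0eq, hIw1eq, hIw2eq, hIw3eq, hNormeq]
  have hgint : Integrable (fun t => (-6*lam^7) * (∫ x in Ioo (0:ℝ) 1, g0 t x)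
      + (-lam^5) * (∫ x in Ioo (0:ℝ) 1, g1 t x) + (-lam^3) * (∫ x in Ioo (0:ℝ) 1, g2 t x)
      + (-lam) * (∫ x in Ioo (0:ℝ) 1, g3 t x)) (volume.restrict (Ioo 0 T)) :=
    (((hInt0.const_mul _).add (hInt1.const_mul _)).add (hInt2.const_mul _)).add
      (hInt3.const_mul _)
  have hfnn : 0 ≤ᵐ[volume.restrict (Ioo 0 T)]
      fun t => δ * ∫ x in Ioo (0:ℝ) 1, gN t x := by
    refine (ae_restrict_iff' measurableSet_Ioo).2 (ae_of_all _ fun t ht => ?_)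
    have hct : 0 < c t := by rw [hcdef]; exact inv_pos.2 (hφ₀pos t ht).1
    have hnn : 0 ≤ ∫ x in Ioo (0:ℝ) 1, gN t x := by
      apply setIntegral_nonneg measurableSet_Ioo
      intro x hx
      have hb0 : 0 < β x := hr.trans_le (hβlow x (Ioo_subset_Icc_self hx)).1
      have hbc : 0 < β x * c t := mul_pos hb0 hct
      rw [hgN]
      positivity
    exact mul_nonneg hδpos.le hnn
  have hle : (fun t => δ * ∫ x in Ioo (0:ℝ) 1, gN t x) ≤ᵐ[volume.restrict (Ioo 0 T)]
      (fun t => (-6*lam^7) * (∫ x in Ioo (0:ℝ) 1, g0 t x)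
        + (-lam^5) * (∫ x in Ioo (0:ℝ) 1, g1 t x) + (-lam^3) * (∫ x in Ioo (0:ℝ) 1, g2 t x)
        + (-lam) * (∫ x in Ioo (0:ℝ) 1, g3 t x)) :=
    (ae_restrict_iff' measurableSet_Ioo).2 (ae_of_all _ fun t ht => hInner t ht)
  calc δ * ∫ t in Ioo (0:ℝ) T, ∫ x in Ioo (0:ℝ) 1, gN t x
      = ∫ t in Ioo (0:ℝ) T, δ * ∫ x in Ioo (0:ℝ) 1, gN t x := (integral_const_mul _ _).symm
    _ ≤ ∫ t in Ioo (0:ℝ) T, ((-6*lam^7) * (∫ x in Ioo (0:ℝ) 1, g0 t x)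
        + (-lam^5) * (∫ x in Ioo (0:ℝ) 1, g1 t x) + (-lam^3) * (∫ x in Ioo (0:ℝ) 1, g2 t x)
        + (-lam) * (∫ x in Ioo (0:ℝ) 1, g3 t x)) :=
        integral_mono_of_nonneg hfnn hgint hle
    _ = -6*lam^7 * (∫ t in Ioo (0:ℝ) T, ∫ x in Ioo (0:ℝ) 1, g0 t x)
        + -lam^5 * (∫ t in Ioo (0:ℝ) T, ∫ x in Ioo (0:ℝ) 1, g1 t x)
        + -lam^3 * (∫ t in Ioo (0:ℝ) T, ∫ x in Ioo (0:ℝ) 1, g2 t x)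
        + -lam * (∫ t in Ioo (0:ℝ) T, ∫ x in Ioo (0:ℝ) 1, g3 t x) := by
        have j0 : IntegrableOn (fun t => (-6*lam^7) * (∫ x in Ioo (0:ℝ) 1, g0 t x))
          (Ioo 0 T) := hInt0.const_mul _
        have j1 : IntegrableOn (fun t => (-lam^5) * (∫ x in Ioo (0:ℝ) 1, g1 t x))
          (Ioo 0 T) := hInt1.const_mul _
        have j2 : IntegrableOn (fun t => (-lam^3) * (∫ x in Ioo (0:ℝ) 1, g2 t x))
          (Ioo 0 T) := hInt2.const_mul _
        have j3 : IntegrableOn (fun t => (-lam) * (∫ x in Ioo (0:ℝ) 1, g3 t x))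
          (Ioo 0 T) := hInt3.const_mul _
        have j01 : IntegrableOn (fun t => (-6*lam^7) * (∫ x in Ioo (0:ℝ) 1, g0 t x)
            + (-lam^5) * (∫ x in Ioo (0:ℝ) 1, g1 t x)) (Ioo 0 T) := j0.add j1
        have j012 : IntegrableOn (fun t => (-6*lam^7) * (∫ x in Ioo (0:ℝ) 1, g0 t x)
            + (-lam^5) * (∫ x in Ioo (0:ℝ) 1, g1 t x)
            + (-lam^3) * (∫ x in Ioo (0:ℝ) 1, g2 t x)) (Ioo 0 T) := j01.add j2
        have fC : ∫ t in Ioo (0:ℝ) T, ((-6*lam^7) * (∫ x in Ioo (0:ℝ) 1, g0 t x)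
              + (-lam^5) * (∫ x in Ioo (0:ℝ) 1, g1 t x) + (-lam^3) * (∫ x in Ioo (0:ℝ) 1, g2 t x)
              + (-lam) * (∫ x in Ioo (0:ℝ) 1, g3 t x))
            = (∫ t in Ioo (0:ℝ) T, ((-6*lam^7) * (∫ x in Ioo (0:ℝ) 1, g0 t x)
              + (-lam^5) * (∫ x in Ioo (0:ℝ) 1, g1 t x) + (-lam^3) * (∫ x in Ioo (0:ℝ) 1, g2 t x)))
              + ∫ t in Ioo (0:ℝ) T, (-lam) * (∫ x in Ioo (0:ℝ) 1, g3 t x) := integral_add j012 j3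
        have fB : ∫ t in Ioo (0:ℝ) T, ((-6*lam^7) * (∫ x in Ioo (0:ℝ) 1, g0 t x)
              + (-lam^5) * (∫ x in Ioo (0:ℝ) 1, g1 t x) + (-lam^3) * (∫ x in Ioo (0:ℝ) 1, g2 t x))
            = (∫ t in Ioo (0:ℝ) T, ((-6*lam^7) * (∫ x in Ioo (0:ℝ) 1, g0 t x)
              + (-lam^5) * (∫ x in Ioo (0:ℝ) 1, g1 t x)))
              + ∫ t in Ioo (0:ℝ) T, (-lam^3) * (∫ x in Ioo (0:ℝ) 1, g2 t x) := integral_add j01 j2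
        have fA : ∫ t in Ioo (0:ℝ) T, ((-6*lam^7) * (∫ x in Ioo (0:ℝ) 1, g0 t x)
              + (-lam^5) * (∫ x in Ioo (0:ℝ) 1, g1 t x))
            = (∫ t in Ioo (0:ℝ) T, (-6*lam^7) * (∫ x in Ioo (0:ℝ) 1, g0 t x))
              + ∫ t in Ioo (0:ℝ) T, (-lam^5) * (∫ x in Ioo (0:ℝ) 1, g1 t x) := integral_add j0 j1
        have f0m : ∫ t in Ioo (0:ℝ) T, (-6*lam^7) * (∫ x in Ioo (0:ℝ) 1, g0 t x)
            = (-6*lam^7) * ∫ t in Ioo (0:ℝ) T, ∫ x in Ioo (0:ℝ) 1, g0 t x := integral_const_mul _ _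
        have f1m : ∫ t in Ioo (0:ℝ) T, (-lam^5) * (∫ x in Ioo (0:ℝ) 1, g1 t x)
            = (-lam^5) * ∫ t in Ioo (0:ℝ) T, ∫ x in Ioo (0:ℝ) 1, g1 t x := integral_const_mul _ _
        have f2m : ∫ t in Ioo (0:ℝ) T, (-lam^3) * (∫ x in Ioo (0:ℝ) 1, g2 t x)
            = (-lam^3) * ∫ t in Ioo (0:ℝ) T, ∫ x in Ioo (0:ℝ) 1, g2 t x := integral_const_mul _ _
        have f3m : ∫ t in Ioo (0:ℝ) T, (-lam) * (∫ x in Ioo (0:ℝ) 1, g3 t x)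
            = (-lam) * ∫ t in Ioo (0:ℝ) T, ∫ x in Ioo (0:ℝ) 1, g3 t x := integral_const_mul _ _
        linarith [fC, fB, fA, f0m, f1m, f2m, f3m]
end

section
/- Let σ∈C²([0,1]) with σ(x)≥σ₀>0, let f be continuous on [0,T]×[0,1], and let z be infinitely differentiable on [0,T]×[0,1] satisfying ∂_t z+∂_x²(σ∂_x²z)=f on (0,T)×(0,1), z(t,0)=z(t,1)=∂_x z(t,0)=∂_x z(t,1)=0 for all t∈[0,T], and z(0,x)=z₀(x). Then there exists C>0, depending only on T and σ₀, such that for every t∈[0,T]: ∫₀¹|z(t,x)|²dx ≤ C( ∫₀ᵀ∫₀¹|f(s,x)|²dxds + ∫₀¹|z₀(x)|²dx ). -/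
open MeasureTheory Set intervalIntegral ContDiff

lemma le_infty_aux (n : ℕ∞) : ((n : WithTop ℕ∞)) ≤ ((⊤:ℕ∞) : WithTop ℕ∞) :=
  WithTop.coe_le_coe.mpr le_top

lemma Qfun_eq (σ Z : ℝ → ℝ) :
    (fun y => σ y * iteratedDeriv 2 Z y) = fun y => σ y * deriv (deriv Z) y := by
  funext y; simp [iteratedDeriv_succ, iteratedDeriv_one]

lemma cont_aux (σ Z : ℝ → ℝ) (hσ2 : ContDiff ℝ 2 σ) (hZ : ContDiff ℝ ∞ Z) :
    Continuous (fun x => iteratedDeriv 2 (fun y => σ y * iteratedDeriv 2 Z y) x) := by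
  have hZ1d := (contDiff_infty_iff_deriv.mp hZ).2
  have hZ2d := (contDiff_infty_iff_deriv.mp hZ1d).2
  have hQ : ContDiff ℝ 2 (fun y => σ y * deriv (deriv Z) y) :=
    hσ2.mul (hZ2d.of_le (by simpa using le_infty_aux 2))
  have : Continuous (fun x => iteratedDeriv 2 (fun y => σ y * deriv (deriv Z) y) x) := by
    have := hQ.iterate_deriv' 0 2
    exact hQ.continuous_iteratedDeriv 2 le_rfl
  rw [Qfun_eq]; exact this

lemma ibp_aux (σ Z : ℝ → ℝ) (hσ2 : ContDiff ℝ 2 σ) (hZ : ContDiff ℝ ∞ Z)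
    (hσnn : ∀ x ∈ Icc (0:ℝ) 1, 0 ≤ σ x)
    (hZ0 : Z 0 = 0) (hZ1 : Z 1 = 0) (hZ0' : deriv Z 0 = 0) (hZ1' : deriv Z 1 = 0) :
    0 ≤ ∫ x in (0:ℝ)..1, Z x * iteratedDeriv 2 (fun y => σ y * iteratedDeriv 2 Z y) x := by
  have hZ1d := (contDiff_infty_iff_deriv.mp hZ).2
  have hZ2d := (contDiff_infty_iff_deriv.mp hZ1d).2
  have hWeq : ∀ y, iteratedDeriv 2 Z y = deriv (deriv Z) y := by
    intro y; simp [iteratedDeriv_succ, iteratedDeriv_one]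
  set Q : ℝ → ℝ := fun y => σ y * deriv (deriv Z) y with hQdef
  have hQiter : ∀ x, iteratedDeriv 2 (fun y => σ y * iteratedDeriv 2 Z y) x
      = deriv (deriv Q) x := by
    intro x
    rw [show (fun y => σ y * iteratedDeriv 2 Z y) = Q by funext y; rw [hQdef, hWeq y]]
    simp [iteratedDeriv_succ, iteratedDeriv_one]
  have hQ : ContDiff ℝ 2 Q := hσ2.mul (hZ2d.of_le (by simpa using le_infty_aux 2))
  have h21 : (2 : WithTop ℕ∞) = 1 + 1 := by norm_num
  have hQ' : ContDiff ℝ 1 (deriv Q) := (contDiff_succ_iff_deriv.mp (h21 ▸ hQ)).2.2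
  have hQd : Differentiable ℝ Q := hQ.differentiable (by norm_num)
  have hQ'd : Differentiable ℝ (deriv Q) := hQ'.differentiable one_ne_zero
  have hQ''c : Continuous (deriv (deriv Q)) := hQ'.continuous_deriv le_rfl
  have hQ'c : Continuous (deriv Q) := hQ'.continuous
  have hZd : Differentiable ℝ Z := hZ.differentiable (by simpa using le_infty_aux 1)
  have hZ'd : Differentiable ℝ (deriv Z) := hZ1d.differentiable (by simpa using le_infty_aux 1)
  have hZ''c : Continuous (deriv (deriv Z)) := hZ2d.continuous
  have hZ'c : Continuous (deriv Z) := hZ1d.continuous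
  have ibp1 : ∫ x in (0:ℝ)..1, Z x * deriv (deriv Q) x
      = -∫ x in (0:ℝ)..1, deriv Z x * deriv Q x := by
    rw [integral_mul_deriv_eq_deriv_mul (u := Z) (v := deriv Q) (u' := deriv Z)
      (v' := deriv (deriv Q))
      (fun x _ => (hZd x).hasDerivAt) (fun x _ => (hQ'd x).hasDerivAt)
      (hZ'c.intervalIntegrable _ _) (hQ''c.intervalIntegrable _ _)]
    rw [hZ0, hZ1]; ring
  have ibp2 : ∫ x in (0:ℝ)..1, deriv Z x * deriv Q x
      = -∫ x in (0:ℝ)..1, deriv (deriv Z) x * Q x := by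
    rw [integral_mul_deriv_eq_deriv_mul (u := deriv Z) (v := Q) (u' := deriv (deriv Z))
      (v' := deriv Q)
      (fun x _ => (hZ'd x).hasDerivAt) (fun x _ => (hQd x).hasDerivAt)
      (hZ''c.intervalIntegrable _ _) (hQ'c.intervalIntegrable _ _)]
    rw [hZ0', hZ1']; ring
  have : ∫ x in (0:ℝ)..1, Z x * iteratedDeriv 2 (fun y => σ y * iteratedDeriv 2 Z y) x
      = ∫ x in (0:ℝ)..1, σ x * (deriv (deriv Z) x)^2 := by
    calc ∫ x in (0:ℝ)..1, Z x * iteratedDeriv 2 (fun y => σ y * iteratedDeriv 2 Z y) x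
        = ∫ x in (0:ℝ)..1, Z x * deriv (deriv Q) x := by
          apply intervalIntegral.integral_congr; intro x _; dsimp only; rw [hQiter]
      _ = ∫ x in (0:ℝ)..1, deriv (deriv Z) x * Q x := by rw [ibp1, ibp2]; ring
      _ = ∫ x in (0:ℝ)..1, σ x * (deriv (deriv Z) x)^2 := by
          apply intervalIntegral.integral_congr; intro x _; dsimp only [hQdef]; ring
  rw [this]
  apply intervalIntegral.integral_nonneg (by norm_num)
  intro x hx
  exact mul_nonneg (hσnn x hx) (sq_nonneg _)

lemma hasDerivAt_E (z : ℝ → ℝ → ℝ) (hz : ContDiff ℝ (⊤ : ℕ∞) ↿z) (t : ℝ) :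
    HasDerivAt (fun s => ∫ x in (0:ℝ)..1, (z s x)^2)
      (∫ x in (0:ℝ)..1, 2 * z t x * fderiv ℝ ↿z (t, x) (1, 0)) t := by
  have hzc : Continuous ↿z := hz.continuous
  have hztc : Continuous (fun p : ℝ × ℝ => fderiv ℝ ↿z p (1, 0)) :=
    (hz.continuous_fderiv (by simp)).clm_apply continuous_const
  have hder : ∀ (s x : ℝ), HasDerivAt (fun s' => z s' x) (fderiv ℝ ↿z (s, x) (1, 0)) s := by
    intro s x
    have h1 : HasDerivAt (fun s' : ℝ => (s', x)) ((1:ℝ), (0:ℝ)) s :=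
      (hasDerivAt_id s).prodMk (hasDerivAt_const s x)
    exact (hz.differentiable (by simp) (s, x)).hasFDerivAt.comp_hasDerivAt s h1
  have hF'c : Continuous (fun p : ℝ × ℝ => 2 * z p.1 p.2 * fderiv ℝ ↿z p (1, 0)) :=
    (continuous_const.mul hzc).mul hztc
  obtain ⟨M, hM⟩ := (isCompact_Icc (a := t - 1) (b := t + 1)).prod
    (isCompact_Icc (a := (0:ℝ)) (b := 1)) |>.exists_bound_of_continuousOn hF'c.continuousOn
  have key := intervalIntegral.hasDerivAt_integral_of_dominated_loc_of_deriv_le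
    (F := fun s x => (z s x)^2)
    (F' := fun s x => 2 * z s x * fderiv ℝ ↿z (s, x) (1, 0))
    (x₀ := t) (s := Metric.ball t 1) (a := (0:ℝ)) (b := 1) (bound := fun _ => M) (μ := volume)
    (Metric.ball_mem_nhds t one_pos)
    (Filter.Eventually.of_forall fun s =>
      ((hzc.comp (continuous_const.prodMk continuous_id)).pow 2).aestronglyMeasurable)
    (((hzc.comp (continuous_const.prodMk continuous_id)).pow 2).intervalIntegrable 0 1)
    ((hF'c.comp (continuous_const.prodMk continuous_id)).aestronglyMeasurable)
    (Filter.Eventually.of_forall fun x hx s hs => by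
      have hx' : x ∈ Icc (0:ℝ) 1 := by
        rcases hx with hx; exact ⟨le_of_lt (by simpa using hx.1), by simpa using hx.2⟩
      have hs' : s ∈ Icc (t-1) (t+1) := by
        rw [Metric.mem_ball, Real.dist_eq, abs_lt] at hs
        constructor <;> linarith [hs.1, hs.2]
      exact hM (s, x) ⟨hs', hx'⟩)
    (intervalIntegrable_const)
    (Filter.Eventually.of_forall fun x _ s _ => by
      have h := (hder s x).mul (hder s x)
      exact (h.congr_deriv (by ring)).congr_of_eventuallyEq
        (Filter.Eventually.of_forall fun u => by simp [pow_two]))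
  exact key.2

theorem stmt12_gronwall_energy_estimate
    (T σ₀ : ℝ) (hT : 0 < T) (hσ₀ : 0 < σ₀) :
    ∃ C > 0, ∀ (σ : ℝ → ℝ) (f z : ℝ → ℝ → ℝ) (z₀ : ℝ → ℝ),
      ContDiff ℝ 2 σ → (∀ x ∈ Icc (0:ℝ) 1, σ₀ ≤ σ x) →
      Continuous ↿f → ContDiff ℝ (⊤ : ℕ∞) ↿z →
      (∀ t ∈ Ioo 0 T, ∀ x ∈ Ioo (0:ℝ) 1,
        deriv (fun s => z s x) t
          + iteratedDeriv 2 (fun y => σ y * iteratedDeriv 2 (z t) y) x = f t x) →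
      (∀ t ∈ Icc 0 T,
        z t 0 = 0 ∧ z t 1 = 0 ∧ deriv (z t) 0 = 0 ∧ deriv (z t) 1 = 0) →
      (∀ x ∈ Icc (0:ℝ) 1, z 0 x = z₀ x) →
      ∀ t ∈ Icc 0 T,
        (∫ x in Ioo (0:ℝ) 1, (z t x)^2)
        ≤ C * ((∫ s in Ioo 0 T, ∫ x in Ioo (0:ℝ) 1, (f s x)^2)
               + (∫ x in Ioo (0:ℝ) 1, (z₀ x)^2)) := by
  refine ⟨Real.exp T, Real.exp_pos T, ?_⟩
  intro σ f z z₀ hσ2 hσlb hf hz hpde hbc hz0 t ht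
  have hzc : Continuous ↿z := hz.continuous
  set E : ℝ → ℝ := fun s => ∫ x in (0:ℝ)..1, (z s x)^2 with hEdef
  set g : ℝ → ℝ := fun s => ∫ x in (0:ℝ)..1, (f s x)^2 with hgdef
  have hfc : ∀ s, Continuous (f s) := fun s => hf.comp (continuous_const.prodMk continuous_id)
  have hzsc : ∀ s, Continuous (z s) := fun s => hzc.comp (continuous_const.prodMk continuous_id)
  have hzs : ∀ s, ContDiff ℝ ∞ (z s) :=
    fun s => (hz.comp (contDiff_const.prodMk contDiff_id)).of_le (by simp)
  have hgc : Continuous g := by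
    have h2 : Continuous (Function.uncurry fun s x => (f s x)^2) := by
      show Continuous fun p : ℝ × ℝ => (f p.1 p.2)^2
      exact (show Continuous fun p : ℝ × ℝ => f p.1 p.2 from hf).pow 2
    exact intervalIntegral.continuous_parametric_intervalIntegral_of_continuous' h2 0 1
  have hgnn : ∀ s, 0 ≤ g s := by
    intro s
    exact intervalIntegral.integral_nonneg (by norm_num) (fun x _ => sq_nonneg _)
  have hEnn : ∀ s, 0 ≤ E s := by
    intro s
    exact intervalIntegral.integral_nonneg (by norm_num) (fun x _ => sq_nonneg _)
  have hE : ∀ s, HasDerivAt E (∫ x in (0:ℝ)..1, 2 * z s x * fderiv ℝ ↿z (s, x) (1, 0)) s :=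
    fun s => hasDerivAt_E z hz s
  have hEc : Continuous E :=
    (Differentiable.continuous (fun s => (hE s).differentiableAt))
  -- the main differential inequality
  have hkey : ∀ s ∈ Ioo 0 T,
      (∫ x in (0:ℝ)..1, 2 * z s x * fderiv ℝ ↿z (s, x) (1, 0)) ≤ E s + g s := by
    intro s hs
    have hsIcc : s ∈ Icc 0 T := ⟨hs.1.le, hs.2.le⟩
    obtain ⟨hb0, hb1, hb0', hb1'⟩ := hbc s hsIcc
    have hder : ∀ x : ℝ, HasDerivAt (fun s' => z s' x) (fderiv ℝ ↿z (s, x) (1, 0)) s := by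
      intro x
      have h1 : HasDerivAt (fun s' : ℝ => (s', x)) ((1:ℝ), (0:ℝ)) s :=
        (hasDerivAt_id s).prodMk (hasDerivAt_const s x)
      exact (hz.differentiable (by simp) (s, x)).hasFDerivAt.comp_hasDerivAt s h1
    set Iter : ℝ → ℝ := fun x => iteratedDeriv 2 (fun y => σ y * iteratedDeriv 2 (z s) y) x
      with hIterdef
    have hIterc : Continuous Iter := cont_aux σ (z s) hσ2 (hzs s)
    have hpde' : ∀ x ∈ Ioo (0:ℝ) 1,
        fderiv ℝ ↿z (s, x) (1, 0) = f s x - Iter x := by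
      intro x hx
      have := hpde s hs x hx
      rw [(hder x).deriv] at this
      linarith [this]
    -- rewrite the integral a.e.
    have hae : ∫ x in (0:ℝ)..1, 2 * z s x * fderiv ℝ ↿z (s, x) (1, 0)
        = ∫ x in (0:ℝ)..1, (2 * z s x * f s x - 2 * (z s x * Iter x)) := by
      apply intervalIntegral.integral_congr_ae
      have h1 : ∀ᵐ x : ℝ, x ≠ (1:ℝ) := by
        rw [MeasureTheory.ae_iff]
        simpa using Real.volume_singleton (x := 1)
      filter_upwards [h1] with x hx1 hx
      have hx' : x ∈ Ioo (0:ℝ) 1 := by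
        rcases hx with hx
        have h0 : (0:ℝ) < x := by simpa using hx.1
        have h1' : x ≤ 1 := by simpa using hx.2
        exact ⟨h0, lt_of_le_of_ne h1' hx1⟩
      rw [hpde' x hx']; ring
    have hint1 : IntervalIntegrable (fun x => 2 * z s x * f s x) volume 0 1 :=
      ((continuous_const.mul (hzsc s)).mul (hfc s)).intervalIntegrable _ _
    have hint2 : IntervalIntegrable (fun x => 2 * (z s x * Iter x)) volume 0 1 :=
      (continuous_const.mul ((hzsc s).mul hIterc)).intervalIntegrable _ _
    have hibp : 0 ≤ ∫ x in (0:ℝ)..1, z s x * Iter x :=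
      ibp_aux σ (z s) hσ2 (hzs s) (fun x hx => le_trans hσ₀.le (hσlb x hx))
        hb0 hb1 hb0' hb1'
    have hsplit : ∫ x in (0:ℝ)..1, (2 * z s x * f s x - 2 * (z s x * Iter x))
        = (∫ x in (0:ℝ)..1, 2 * z s x * f s x)
          - 2 * ∫ x in (0:ℝ)..1, z s x * Iter x := by
      rw [intervalIntegral.integral_sub hint1 hint2, intervalIntegral.integral_const_mul]
    have hAM : (∫ x in (0:ℝ)..1, 2 * z s x * f s x) ≤ E s + g s := by
      have hmono : (∫ x in (0:ℝ)..1, 2 * z s x * f s x)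
          ≤ ∫ x in (0:ℝ)..1, ((z s x)^2 + (f s x)^2) := by
        apply intervalIntegral.integral_mono_on (by norm_num) hint1
        · exact (((hzsc s).pow 2).add ((hfc s).pow 2)).intervalIntegrable _ _
        · intro x _
          nlinarith [sq_nonneg (z s x - f s x)]
      have : ∫ x in (0:ℝ)..1, ((z s x)^2 + (f s x)^2) = E s + g s := by
        rw [intervalIntegral.integral_add (f := fun x => (z s x)^2) (g := fun x => (f s x)^2)
          (((hzsc s).pow 2).intervalIntegrable _ _)
          (((hfc s).pow 2).intervalIntegrable _ _)]
      linarith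
    rw [hae, hsplit]
    linarith
  -- Gronwall via the auxiliary function γ
  have hegc : Continuous (fun u : ℝ => Real.exp (-u) * g u) :=
    ((Real.continuous_exp.comp continuous_neg).mul hgc)
  set γ : ℝ → ℝ := fun s => Real.exp (-s) * E s - ∫ u in (0:ℝ)..s, Real.exp (-u) * g u
    with hγdef
  have hγderiv : ∀ s, HasDerivAt γ
      ((-Real.exp (-s)) * E s
        + Real.exp (-s) * (∫ x in (0:ℝ)..1, 2 * z s x * fderiv ℝ ↿z (s, x) (1, 0))
        - Real.exp (-s) * g s) s := by
    intro s
    have h1 : HasDerivAt (fun u : ℝ => Real.exp (-u)) (-Real.exp (-s)) s := by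
      have := ((hasDerivAt_id s).neg.exp)
      simpa using this
    have h2 := (h1.mul (hE s))
    have h3 : HasDerivAt (fun u : ℝ => ∫ v in (0:ℝ)..u, Real.exp (-v) * g v)
        (Real.exp (-s) * g s) s :=
      (hegc.integral_hasStrictDerivAt 0 s).hasDerivAt
    exact (h2.sub h3).congr_deriv (by ring)
  have hγc : Continuous γ := by
    have : Differentiable ℝ γ := fun s => (hγderiv s).differentiableAt
    exact this.continuous
  have hγanti : AntitoneOn γ (Icc 0 T) := by
    apply antitoneOn_of_deriv_nonpos (convex_Icc 0 T) hγc.continuousOn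
    · intro s hs
      exact ((hγderiv s).differentiableAt).differentiableWithinAt
    · intro s hs
      rw [interior_Icc] at hs
      rw [(hγderiv s).deriv]
      have hk := hkey s hs
      have hexp : 0 < Real.exp (-s) := Real.exp_pos _
      nlinarith [hk, hexp]
  have hγt : γ t ≤ γ 0 := hγanti ⟨le_refl 0, hT.le⟩ ht ht.1
  have hγ0 : γ 0 = E 0 := by simp [hγdef]
  -- bound the time integral
  have hgint : ∫ u in (0:ℝ)..t, Real.exp (-u) * g u ≤ ∫ u in (0:ℝ)..T, g u := by
    have step1 : ∫ u in (0:ℝ)..t, Real.exp (-u) * g u ≤ ∫ u in (0:ℝ)..t, g u := by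
      apply intervalIntegral.integral_mono_on ht.1 (hegc.intervalIntegrable _ _)
        (hgc.intervalIntegrable _ _)
      intro u hu
      have h1 : Real.exp (-u) ≤ 1 := Real.exp_le_one_iff.mpr (by linarith [hu.1])
      nlinarith [hgnn u, h1]
    have step2 : ∫ u in (0:ℝ)..t, g u ≤ ∫ u in (0:ℝ)..T, g u := by
      apply intervalIntegral.integral_mono_interval (le_refl (0:ℝ)) ht.1 ht.2
      · filter_upwards with u; exact hgnn u
      · exact hgc.intervalIntegrable _ _
    linarith
  -- conclude the Gronwall bound
  have hmain : E t ≤ Real.exp T * ((∫ u in (0:ℝ)..T, g u) + E 0) := by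
    have h1 : Real.exp (-t) * E t ≤ E 0 + ∫ u in (0:ℝ)..t, Real.exp (-u) * g u := by
      have := hγt
      rw [hγ0] at this
      simp only [hγdef] at this
      linarith
    have h2 : Real.exp (-t) * E t ≤ E 0 + ∫ u in (0:ℝ)..T, g u := by linarith
    have h3 : E t ≤ Real.exp t * (E 0 + ∫ u in (0:ℝ)..T, g u) := by
      have hexp : 0 < Real.exp (-t) := Real.exp_pos _
      have := mul_le_mul_of_nonneg_left h2 (le_of_lt (Real.exp_pos t))
      rw [← mul_assoc, ← Real.exp_add] at this
      simpa using this
    have h4 : Real.exp t ≤ Real.exp T := Real.exp_le_exp.mpr ht.2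
    have h5 : 0 ≤ E 0 + ∫ u in (0:ℝ)..T, g u := by
      have : 0 ≤ ∫ u in (0:ℝ)..T, g u :=
        intervalIntegral.integral_nonneg hT.le (fun u _ => hgnn u)
      linarith [hEnn 0]
    nlinarith [h3, mul_le_mul_of_nonneg_right h4 h5]
  -- convert set integrals to interval integrals
  have hIoo : ∀ (h : ℝ → ℝ), (∫ x in Ioo (0:ℝ) 1, h x) = ∫ x in (0:ℝ)..1, h x := by
    intro h
    rw [intervalIntegral.integral_of_le (by norm_num : (0:ℝ) ≤ 1),
      MeasureTheory.integral_Ioc_eq_integral_Ioo]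
  have hIooT : ∀ (h : ℝ → ℝ), (∫ x in Ioo (0:ℝ) T, h x) = ∫ x in (0:ℝ)..T, h x := by
    intro h
    rw [intervalIntegral.integral_of_le hT.le, MeasureTheory.integral_Ioc_eq_integral_Ioo]
  have hzt : (∫ x in Ioo (0:ℝ) 1, (z t x)^2) = E t := hIoo _
  have hfs : (∫ s in Ioo 0 T, ∫ x in Ioo (0:ℝ) 1, (f s x)^2) = ∫ u in (0:ℝ)..T, g u := by
    rw [hIooT]
    apply intervalIntegral.integral_congr
    intro u _
    exact hIoo _
  have hz₀ : (∫ x in Ioo (0:ℝ) 1, (z₀ x)^2) = E 0 := by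
    rw [show (∫ x in Ioo (0:ℝ) 1, (z₀ x)^2) = ∫ x in Ioo (0:ℝ) 1, (z 0 x)^2 from ?_, hIoo]
    apply MeasureTheory.setIntegral_congr_fun measurableSet_Ioo
    intro x hx
    dsimp only
    rw [hz0 x ⟨hx.1.le, hx.2.le⟩]
  rw [hzt, hfs, hz₀]
  exact hmain
end

section
/- Let σ∈C²([0,1]) with σ(x)≥σ₀>0, let f be continuous on [0,T]×[0,1], and let z be infinitely differentiable on [0,T]×[0,1] satisfying ∂_t z+∂_x²(σ∂_x²z)=f on (0,T)×(0,1), z(t,0)=z(t,1)=∂_x z(t,0)=∂_x z(t,1)=0 for all t∈[0,T], and z(0,x)=z₀(x). Then for every t∈[0,T]: ∫₀¹σ(x)|∂_x²z(t,x)|²dx + ∫₀ᵗ∫₀¹|∂_x²(σ∂_x²z)(s,x)|²dxds ≤ ∫₀¹σ(x)|z₀''(x)|²dx + ∫₀ᵗ∫₀¹|f(s,x)|²dxds. -/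
open MeasureTheory Set

section helpers

theorem hasDerivAt_sliceR {g : ℝ → ℝ → ℝ} (hg : Differentiable ℝ ↿g) (t x : ℝ) :
    HasDerivAt (g t) (fderiv ℝ ↿g (t, x) (0, 1)) x := by
  have h1 : HasFDerivAt ↿g (fderiv ℝ ↿g (t, x)) (t, x) := (hg _).hasFDerivAt
  have h2 : HasDerivAt (fun y : ℝ => ((t : ℝ), y)) ((0:ℝ), (1:ℝ)) x := by
    simpa using (HasDerivAt.prodMk (hasDerivAt_const x t) (hasDerivAt_id x))
  exact h1.comp_hasDerivAt x h2

theorem hasDerivAt_sliceL {g : ℝ → ℝ → ℝ} (hg : Differentiable ℝ ↿g) (t x : ℝ) :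
    HasDerivAt (fun s => g s x) (fderiv ℝ ↿g (t, x) (1, 0)) t := by
  have h1 : HasFDerivAt ↿g (fderiv ℝ ↿g (t, x)) (t, x) := (hg _).hasFDerivAt
  have h2 : HasDerivAt (fun s : ℝ => (s, (x : ℝ))) ((1:ℝ), (0:ℝ)) t := by
    simpa using (HasDerivAt.prodMk (hasDerivAt_id t) (hasDerivAt_const t x))
  exact h1.comp_hasDerivAt t h2

theorem deriv_sliceR {g : ℝ → ℝ → ℝ} (hg : Differentiable ℝ ↿g) (t x : ℝ) :
    deriv (g t) x = fderiv ℝ ↿g (t, x) (0, 1) :=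
  (hasDerivAt_sliceR hg t x).deriv

theorem deriv_sliceL {g : ℝ → ℝ → ℝ} (hg : Differentiable ℝ ↿g) (t x : ℝ) :
    deriv (fun s => g s x) t = fderiv ℝ ↿g (t, x) (1, 0) :=
  (hasDerivAt_sliceL hg t x).deriv

theorem hasDerivAt_pR {g : ℝ → ℝ → ℝ} (hg : Differentiable ℝ ↿g) (t x : ℝ) :
    HasDerivAt (g t) (deriv (g t) x) x :=
  (hasDerivAt_sliceR hg t x).differentiableAt.hasDerivAt

theorem hasDerivAt_pL {g : ℝ → ℝ → ℝ} (hg : Differentiable ℝ ↿g) (t x : ℝ) :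
    HasDerivAt (fun s => g s x) (deriv (fun s => g s x) t) t :=
  (hasDerivAt_sliceL hg t x).differentiableAt.hasDerivAt

theorem contDiff_pdx {n : ℕ} {g : ℝ → ℝ → ℝ} (hg : ContDiff ℝ (n + 1) ↿g) :
    ContDiff ℝ n ↿(fun t x => deriv (g t) x) := by
  have hd : Differentiable ℝ ↿g := hg.differentiable (by simp)
  have heq : ↿(fun t x => deriv (g t) x) = fun p : ℝ × ℝ => fderiv ℝ ↿g p ((0:ℝ), (1:ℝ)) := by
    ext ⟨t, x⟩
    exact deriv_sliceR hd t x
  rw [heq]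
  exact (hg.fderiv_right (le_refl _)).clm_apply contDiff_const

theorem contDiff_pdt {n : ℕ} {g : ℝ → ℝ → ℝ} (hg : ContDiff ℝ (n + 1) ↿g) :
    ContDiff ℝ n ↿(fun t x => deriv (fun s => g s x) t) := by
  have hd : Differentiable ℝ ↿g := hg.differentiable (by simp)
  have heq : ↿(fun t x => deriv (fun s => g s x) t)
      = fun p : ℝ × ℝ => fderiv ℝ ↿g p ((1:ℝ), (0:ℝ)) := by
    ext ⟨t, x⟩
    exact deriv_sliceL hd t x
  rw [heq]
  exact (hg.fderiv_right (le_refl _)).clm_apply contDiff_const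

/-- Clairaut / symmetry of mixed partial derivatives for C² functions of two real variables. -/
theorem pdx_pdt_comm {g : ℝ → ℝ → ℝ} (hg : ContDiff ℝ 2 ↿g) (t x : ℝ) :
    deriv (fun y => deriv (fun s => g s y) t) x = deriv (fun s => deriv (g s) x) t := by
  have hd : Differentiable ℝ ↿g := hg.differentiable two_ne_zero
  set F := fderiv ℝ ↿g with hF
  have hFd : Differentiable ℝ F := (hg.fderiv_right (m := 1) (by norm_num)).differentiable one_ne_zero
  have hsym : ∀ v u : ℝ × ℝ, fderiv ℝ F (t, x) v u = fderiv ℝ F (t, x) u v := by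
    intro v u
    exact second_derivative_symmetric (fun y => (hd y).hasFDerivAt)
      (hFd (t, x)).hasFDerivAt v u
  have hL : deriv (fun y => deriv (fun s => g s y) t) x = fderiv ℝ F (t, x) (0, 1) (1, 0) := by
    have h1 : (fun y => deriv (fun s => g s y) t) = fun y => F (t, y) (1, 0) := by
      ext y; exact deriv_sliceL hd t y
    rw [h1]
    have h2 : HasDerivAt (fun y : ℝ => ((t : ℝ), y)) ((0:ℝ), (1:ℝ)) x := by
      simpa using (HasDerivAt.prodMk (hasDerivAt_const x t) (hasDerivAt_id x))
    have h3 : HasDerivAt (fun y : ℝ => F (t, y)) (fderiv ℝ F (t, x) (0, 1)) x :=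
      (hFd (t, x)).hasFDerivAt.comp_hasDerivAt x h2
    have h4 : HasDerivAt (fun y : ℝ => F (t, y) ((1:ℝ), (0:ℝ)))
        (fderiv ℝ F (t, x) (0, 1) (1, 0)) x := by
      simpa using h3.clm_apply (hasDerivAt_const x ((1:ℝ), (0:ℝ)))
    exact h4.deriv
  have hR : deriv (fun s => deriv (g s) x) t = fderiv ℝ F (t, x) (1, 0) (0, 1) := by
    have h1 : (fun s => deriv (g s) x) = fun s => F (s, x) (0, 1) := by
      ext s; exact deriv_sliceR hd s x
    rw [h1]
    have h2 : HasDerivAt (fun s : ℝ => (s, (x : ℝ))) ((1:ℝ), (0:ℝ)) t := by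
      simpa using (HasDerivAt.prodMk (hasDerivAt_id t) (hasDerivAt_const t x))
    have h3 : HasDerivAt (fun s : ℝ => F (s, x)) (fderiv ℝ F (t, x) (1, 0)) t :=
      (hFd (t, x)).hasFDerivAt.comp_hasDerivAt t h2
    have h4 : HasDerivAt (fun s : ℝ => F (s, x) ((0:ℝ), (1:ℝ)))
        (fderiv ℝ F (t, x) (1, 0) (0, 1)) t := by
      simpa using h3.clm_apply (hasDerivAt_const t ((0:ℝ), (1:ℝ)))
    exact h4.deriv
  rw [hL, hR, hsym]

theorem cont_slice {g : ℝ → ℝ → ℝ} (hg : Continuous ↿g) (t : ℝ) : Continuous (g t) :=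
  hg.comp (Continuous.prodMk_right t)

theorem integrableOn_Ioo_of_continuous {h : ℝ → ℝ} (hh : Continuous h) :
    IntegrableOn h (Ioo (0:ℝ) 1) volume :=
  (hh.continuousOn.integrableOn_compact isCompact_Icc).mono_set Ioo_subset_Icc_self

theorem cont_param_integral {h : ℝ → ℝ → ℝ} (hh : Continuous ↿h) :
    Continuous (fun s => ∫ x in Ioo (0:ℝ) 1, h s x) := by
  have := continuous_parametric_integral_of_continuous (μ := (volume : Measure ℝ))
    (f := h) hh (s := Icc (0:ℝ) 1) isCompact_Icc
  simpa only [integral_Icc_eq_integral_Ioo] using this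

end helpers

theorem stmt14_higher_order_energy_estimate
    (T σ₀ : ℝ) (σ : ℝ → ℝ) (f z : ℝ → ℝ → ℝ) (z₀ : ℝ → ℝ)
    (hT : 0 < T) (hσ₀ : 0 < σ₀)
    (hσ : ContDiff ℝ 2 σ) (hσpos : ∀ x ∈ Icc (0:ℝ) 1, σ₀ ≤ σ x)
    (hf : Continuous ↿f) (hz : ContDiff ℝ (⊤ : ℕ∞) ↿z)
    (heq : ∀ t ∈ Ioo 0 T, ∀ x ∈ Ioo (0:ℝ) 1,
      deriv (fun s => z s x) t
        + iteratedDeriv 2 (fun y => σ y * iteratedDeriv 2 (z t) y) x = f t x)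
    (hbc : ∀ t ∈ Icc 0 T,
      z t 0 = 0 ∧ z t 1 = 0 ∧ deriv (z t) 0 = 0 ∧ deriv (z t) 1 = 0)
    (hic : ∀ x ∈ Icc (0:ℝ) 1, z 0 x = z₀ x) :
    ∀ t ∈ Icc 0 T,
      (∫ x in Ioo (0:ℝ) 1, σ x * (iteratedDeriv 2 (z t) x)^2)
        + (∫ s in Ioo 0 t, ∫ x in Ioo (0:ℝ) 1,
            (iteratedDeriv 2 (fun y => σ y * iteratedDeriv 2 (z s) y) x)^2)
      ≤ (∫ x in Ioo (0:ℝ) 1, σ x * (iteratedDeriv 2 z₀ x)^2)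
        + (∫ s in Ioo 0 t, ∫ x in Ioo (0:ℝ) 1, (f s x)^2) := by
  have hzn : ∀ n : ℕ, ContDiff ℝ n ↿z := fun n => hz.of_le (by exact_mod_cast le_top)
  set z1 : ℝ → ℝ → ℝ := fun t x => deriv (z t) x with hz1def
  set z2 : ℝ → ℝ → ℝ := fun t x => deriv (z1 t) x with hz2def
  set zt : ℝ → ℝ → ℝ := fun t x => deriv (fun s => z s x) t with hztdef
  set v : ℝ → ℝ → ℝ := fun t x => deriv (fun s => z2 s x) t with hvdef
  set g2 : ℝ → ℝ → ℝ := fun t x => σ x * z2 t x with hg2def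
  set q : ℝ → ℝ → ℝ := fun t x => deriv (g2 t) x with hqdef
  set w : ℝ → ℝ → ℝ := fun t x => deriv (q t) x with hwdef
  set zt1 : ℝ → ℝ → ℝ := fun t x => deriv (zt t) x with hzt1def
  set zt2 : ℝ → ℝ → ℝ := fun t x => deriv (zt1 t) x with hzt2def
  -- smoothness of all the auxiliary functions
  have hz1s : ∀ n : ℕ, ContDiff ℝ n ↿z1 := fun n => contDiff_pdx (hzn (n+1))
  have hz2s : ∀ n : ℕ, ContDiff ℝ n ↿z2 := fun n => contDiff_pdx (hz1s (n+1))
  have hzts : ∀ n : ℕ, ContDiff ℝ n ↿zt := fun n => contDiff_pdt (hzn (n+1))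
  have hvs : ∀ n : ℕ, ContDiff ℝ n ↿v := fun n => contDiff_pdt (hz2s (n+1))
  have hzt1s : ∀ n : ℕ, ContDiff ℝ n ↿zt1 := fun n => contDiff_pdx (hzts (n+1))
  have hzt2s : ∀ n : ℕ, ContDiff ℝ n ↿zt2 := fun n => contDiff_pdx (hzt1s (n+1))
  have hg2s : ContDiff ℝ ((1:ℕ) + 1) ↿g2 := by
    have : ContDiff ℝ ((1:ℕ)+1)
        (fun p : ℝ × ℝ => σ p.2 * z2 p.1 p.2) := by
      have h1 : ContDiff ℝ ((1:ℕ)+1) (fun p : ℝ × ℝ => σ p.2) := by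
        exact (hσ.of_le (by norm_cast)).comp contDiff_snd
      exact h1.mul (hz2s 2)
    exact this
  have hqs : ContDiff ℝ ((0:ℕ) + 1) ↿q := by
    have := contDiff_pdx (g := g2) hg2s
    exact this.of_le (by norm_cast)
  have hws : Continuous ↿w := by
    have := contDiff_pdx (g := q) hqs
    exact this.continuous
  -- differentiability of uncurried functions
  have hdiff : ∀ {g : ℝ → ℝ → ℝ} (n : ℕ), (∀ m : ℕ, ContDiff ℝ m ↿g) → Differentiable ℝ ↿g :=
    fun {g} n h => (h 1).differentiable (by norm_cast)
  have hzd : Differentiable ℝ ↿z := hdiff 1 hzn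
  have hz1d : Differentiable ℝ ↿z1 := hdiff 1 hz1s
  have hz2d : Differentiable ℝ ↿z2 := hdiff 1 hz2s
  have hztd : Differentiable ℝ ↿zt := hdiff 1 hzts
  have hzt1d : Differentiable ℝ ↿zt1 := hdiff 1 hzt1s
  have hg2d : Differentiable ℝ ↿g2 := hg2s.differentiable (by norm_cast)
  have hqd : Differentiable ℝ ↿q := hqs.differentiable (by norm_cast)
  -- rewriting iterated derivatives
  have hiter : ∀ g : ℝ → ℝ, iteratedDeriv 2 g = deriv (deriv g) := by
    intro g
    have h1 : iteratedDeriv 2 g = deriv (iteratedDeriv 1 g) := iteratedDeriv_succ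
    rw [h1, iteratedDeriv_one]
  have h2z : ∀ t x, iteratedDeriv 2 (z t) x = z2 t x := by
    intro t x; rw [hiter]
    all_goals rfl
  have hinner : ∀ t, (fun y => σ y * iteratedDeriv 2 (z t) y) = g2 t := by
    intro t; funext y; rw [h2z]
  have hw2 : ∀ t x, iteratedDeriv 2 (fun y => σ y * iteratedDeriv 2 (z t) y) x = w t x := by
    intro t x; rw [hinner, hiter]
    all_goals rfl
  -- the PDE in terms of the auxiliary functions
  have hpde : ∀ s ∈ Ioo 0 T, ∀ x ∈ Ioo (0:ℝ) 1, zt s x = f s x - w s x := by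
    intro s hs x hx
    have := heq s hs x hx
    rw [hw2] at this
    have hzt : zt s x = deriv (fun s => z s x) s := rfl
    linarith [this]
  -- Clairaut
  have hcl1 : ∀ t x, zt1 t x = deriv (fun s => z1 s x) t := by
    intro t x
    exact pdx_pdt_comm (g := z) (by exact_mod_cast hzn 2) t x
  have hcl2 : ∀ t x, deriv (fun y => deriv (fun s => z1 s y) t) x = v t x := by
    intro t x
    exact pdx_pdt_comm (g := z1) (by exact_mod_cast hz1s 2) t x
  have hzt2v : ∀ t x, zt2 t x = v t x := by
    intro t x
    have h1 : zt1 t = fun y => deriv (fun s => z1 s y) t := funext fun y => hcl1 t y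
    show deriv (zt1 t) x = v t x
    rw [h1]
    exact hcl2 t x
  -- boundary values of time derivatives
  have hbt : ∀ t ∈ Ioo 0 T, zt t 0 = 0 ∧ zt t 1 = 0 ∧ zt1 t 0 = 0 ∧ zt1 t 1 = 0 := by
    intro t ht
    have hmem : Icc 0 T ∈ nhds t := Icc_mem_nhds ht.1 ht.2
    have e0 : (fun s => z s 0) =ᶠ[nhds t] (fun _ => (0:ℝ)) := by
      filter_upwards [hmem] with s hs using (hbc s hs).1
    have e1 : (fun s => z s 1) =ᶠ[nhds t] (fun _ => (0:ℝ)) := by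
      filter_upwards [hmem] with s hs using (hbc s hs).2.1
    have e2 : (fun s => z1 s 0) =ᶠ[nhds t] (fun _ => (0:ℝ)) := by
      filter_upwards [hmem] with s hs using (hbc s hs).2.2.1
    have e3 : (fun s => z1 s 1) =ᶠ[nhds t] (fun _ => (0:ℝ)) := by
      filter_upwards [hmem] with s hs using (hbc s hs).2.2.2
    refine ⟨?_, ?_, ?_, ?_⟩
    · show deriv (fun s => z s 0) t = 0
      rw [e0.deriv_eq, deriv_const]
    · show deriv (fun s => z s 1) t = 0
      rw [e1.deriv_eq, deriv_const]
    · rw [hcl1, e2.deriv_eq, deriv_const]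
    · rw [hcl1, e3.deriv_eq, deriv_const]
  -- integration by parts
  have hIBP : ∀ t ∈ Ioo 0 T,
      ∫ x in (0:ℝ)..1, zt t x * w t x = ∫ x in (0:ℝ)..1, v t x * (σ x * z2 t x) := by
    intro t ht
    obtain ⟨b0, b1, b2, b3⟩ := hbt t ht
    have step1 : ∫ x in (0:ℝ)..1, zt t x * w t x
        = zt t 1 * q t 1 - zt t 0 * q t 0 - ∫ x in (0:ℝ)..1, zt1 t x * q t x := by
      refine intervalIntegral.integral_mul_deriv_eq_deriv_mul
        (fun x _ => hasDerivAt_pR hztd t x)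
        (fun x _ => hasDerivAt_pR hqd t x)
        ((cont_slice (hzt1s 0).continuous t).intervalIntegrable 0 1)
        ((cont_slice hws t).intervalIntegrable 0 1)
    have step2 : ∫ x in (0:ℝ)..1, zt1 t x * q t x
        = zt1 t 1 * g2 t 1 - zt1 t 0 * g2 t 0 - ∫ x in (0:ℝ)..1, zt2 t x * g2 t x := by
      refine intervalIntegral.integral_mul_deriv_eq_deriv_mul
        (fun x _ => hasDerivAt_pR hzt1d t x)
        (fun x _ => hasDerivAt_pR hg2d t x)
        ((cont_slice (hzt2s 0).continuous t).intervalIntegrable 0 1)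
        ((cont_slice hqs.continuous t).intervalIntegrable 0 1)
    rw [step1, b0, b1, step2, b2, b3]
    ring_nf
    refine intervalIntegral.integral_congr fun x _ => ?_
    rw [hzt2v]
    ring
  -- the energy functional and auxiliary parametric integrals
  set G : ℝ → ℝ := fun s => ∫ x in Ioo (0:ℝ) 1, σ x * (z2 s x)^2 with hGdef
  set Wi : ℝ → ℝ := fun s => ∫ x in Ioo (0:ℝ) 1, (w s x)^2 with hWidef
  set Fi : ℝ → ℝ := fun s => ∫ x in Ioo (0:ℝ) 1, (f s x)^2 with hFidef
  set D : ℝ → ℝ := fun s => ∫ x in Ioo (0:ℝ) 1, 2 * ((f s x - w s x) * w s x) with hDdef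
  have hcont_z2 : Continuous ↿z2 := (hz2s 0).continuous
  have hcont_v : Continuous ↿v := (hvs 0).continuous
  have hσc : Continuous σ := hσ.continuous
  -- derivative of G (everywhere)
  have hGderiv : ∀ s₀ : ℝ,
      HasDerivAt G (∫ x in Ioo (0:ℝ) 1, σ x * (2 * z2 s₀ x * v s₀ x)) s₀ := by
    intro s₀
    have hcontF' : Continuous (fun p : ℝ × ℝ => σ p.2 * (2 * z2 p.1 p.2 * v p.1 p.2)) := by
      apply Continuous.mul (hσc.comp continuous_snd)
      exact (continuous_const.mul hcont_z2).mul hcont_v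
    obtain ⟨C, hC⟩ := ((isCompact_Icc (a := s₀ - 1) (b := s₀ + 1)).prod
      (isCompact_Icc (a := (0:ℝ)) (b := 1))).exists_bound_of_continuousOn
      hcontF'.continuousOn
    have key := hasDerivAt_integral_of_dominated_loc_of_deriv_le
      (μ := volume.restrict (Ioo (0:ℝ) 1)) (x₀ := s₀)
      (F := fun s x => σ x * (z2 s x)^2) (F' := fun s x => σ x * (2 * z2 s x * v s x))
      (bound := fun _ => C) (Metric.ball_mem_nhds s₀ one_pos)
      (by
        filter_upwards with s
        exact (hσc.mul ((cont_slice hcont_z2 s).pow 2)).aestronglyMeasurable)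
      (integrableOn_Ioo_of_continuous (hσc.mul ((cont_slice hcont_z2 s₀).pow 2)))
      ((hσc.mul ((continuous_const.mul (cont_slice hcont_z2 s₀)).mul
        (cont_slice hcont_v s₀))).aestronglyMeasurable)
      (by
        refine (ae_restrict_iff' measurableSet_Ioo).2 ?_
        filter_upwards with x hx
        intro s hs
        have hd : |s - s₀| < 1 := by simpa [Real.dist_eq] using Metric.mem_ball.1 hs
        have hd' := abs_lt.1 hd
        have hsmem : s ∈ Icc (s₀ - 1) (s₀ + 1) := ⟨by linarith [hd'.1], by linarith [hd'.2]⟩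
        exact hC (s, x) (Set.mk_mem_prod hsmem (Ioo_subset_Icc_self hx)))
      (by
        refine integrableOn_const ?_
        simp [Real.volume_Ioo])
      (by
        filter_upwards with x
        intro s hs
        have h1 : HasDerivAt (fun s => z2 s x) (v s x) s := hasDerivAt_pL hz2d s x
        have h2 := (h1.pow 2).const_mul (σ x)
        simpa [pow_one] using h2)
    exact key.2
  have hGD : ∀ s ∈ Ioo 0 T, HasDerivAt G (D s) s := by
    intro s hs
    have h1 := hGderiv s
    have h2 : ∫ x in Ioo (0:ℝ) 1, σ x * (2 * z2 s x * v s x) = D s := by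
      have e1 : ∫ x in Ioo (0:ℝ) 1, σ x * (2 * z2 s x * v s x)
          = 2 * ∫ x in Ioo (0:ℝ) 1, v s x * (σ x * z2 s x) := by
        rw [← integral_const_mul]
        exact setIntegral_congr_fun measurableSet_Ioo fun x _ => by ring
      have e2 : ∫ x in Ioo (0:ℝ) 1, v s x * (σ x * z2 s x)
          = ∫ x in Ioo (0:ℝ) 1, zt s x * w s x := by
        rw [← integral_Ioc_eq_integral_Ioo, ← intervalIntegral.integral_of_le zero_le_one,
          ← integral_Ioc_eq_integral_Ioo (f := fun x => zt s x * w s x),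
          ← intervalIntegral.integral_of_le zero_le_one]
        exact (hIBP s hs).symm
      have e3 : ∫ x in Ioo (0:ℝ) 1, zt s x * w s x
          = ∫ x in Ioo (0:ℝ) 1, (f s x - w s x) * w s x := by
        exact setIntegral_congr_fun measurableSet_Ioo fun x hx => by rw [hpde s hs x hx]
      have eD : D s = 2 * ∫ x in Ioo (0:ℝ) 1, (f s x - w s x) * w s x := by
        simp only [hDdef]
        rw [integral_const_mul]
      rw [e1, e2, e3, eD]
    rwa [h2] at h1
  -- continuity of the parametric integrals
  have hDcont : Continuous D := by
    rw [hDdef]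
    exact cont_param_integral (by fun_prop)
  have hWicont : Continuous Wi := by
    rw [hWidef]
    exact cont_param_integral (by fun_prop)
  have hFicont : Continuous Fi := by
    rw [hFidef]
    exact cont_param_integral (by fun_prop)
  have hGcont : Continuous G := by
    rw [continuous_iff_continuousAt]
    exact fun s => (hGderiv s).differentiableAt.continuousAt
  -- pointwise energy inequality
  have hkey : ∀ s : ℝ, D s + Wi s - Fi s ≤ 0 := by
    intro s
    have hiw : IntegrableOn (fun x => (w s x)^2) (Ioo (0:ℝ) 1) volume :=
      integrableOn_Ioo_of_continuous ((cont_slice hws s).pow 2)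
    have hif : IntegrableOn (fun x => (f s x)^2) (Ioo (0:ℝ) 1) volume :=
      integrableOn_Ioo_of_continuous ((cont_slice hf s).pow 2)
    have hid : IntegrableOn (fun x => 2 * ((f s x - w s x) * w s x)) (Ioo (0:ℝ) 1) volume :=
      integrableOn_Ioo_of_continuous (continuous_const.mul
        (((cont_slice hf s).sub (cont_slice hws s)).mul (cont_slice hws s)))
    have hsum : IntegrableOn
        (fun x => 2 * ((f s x - w s x) * w s x) + (w s x)^2) (Ioo (0:ℝ) 1) volume :=
      integrableOn_Ioo_of_continuous ((continuous_const.mul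
        (((cont_slice hf s).sub (cont_slice hws s)).mul (cont_slice hws s))).add
        ((cont_slice hws s).pow 2))
    have e : D s + Wi s - Fi s
        = ∫ x in Ioo (0:ℝ) 1,
            (2 * ((f s x - w s x) * w s x) + (w s x)^2 - (f s x)^2) := by
      simp only [hDdef, hWidef, hFidef]
      rw [← integral_add hid hiw, ← integral_sub hsum hif]
    rw [e]
    have e2 : (fun x => 2 * ((f s x - w s x) * w s x) + (w s x)^2 - (f s x)^2)
        = fun x => -((w s x - f s x)^2) := funext fun x => by ring
    rw [e2, integral_neg]
    exact neg_nonpos.2 (integral_nonneg fun x => sq_nonneg _)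
  -- conclusion
  intro t ht
  have h0t : (0:ℝ) ≤ t := ht.1
  have hFTC : ∫ s in (0:ℝ)..t, D s = G t - G 0 :=
    intervalIntegral.integral_eq_sub_of_hasDeriv_right_of_le h0t
      hGcont.continuousOn
      (fun s hs => (hGD s ⟨hs.1, lt_of_lt_of_le hs.2 ht.2⟩).hasDerivWithinAt)
      (hDcont.intervalIntegrable 0 t)
  have hA : (∫ x in Ioo (0:ℝ) 1, σ x * (iteratedDeriv 2 (z t) x)^2) = G t := by
    rw [hGdef]
    exact setIntegral_congr_fun measurableSet_Ioo fun x _ => by rw [h2z]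
  have hB : (∫ s in Ioo 0 t, ∫ x in Ioo (0:ℝ) 1,
        (iteratedDeriv 2 (fun y => σ y * iteratedDeriv 2 (z s) y) x)^2)
      = ∫ s in (0:ℝ)..t, Wi s := by
    rw [intervalIntegral.integral_of_le h0t, integral_Ioc_eq_integral_Ioo]
    refine setIntegral_congr_fun measurableSet_Ioo fun s _ => ?_
    rw [hWidef]
    exact setIntegral_congr_fun measurableSet_Ioo fun x _ => by rw [hw2]
  have hB' : (∫ s in Ioo 0 t, ∫ x in Ioo (0:ℝ) 1, (f s x)^2) = ∫ s in (0:ℝ)..t, Fi s := by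
    rw [intervalIntegral.integral_of_le h0t, integral_Ioc_eq_integral_Ioo]
  have hC0 : G 0 = ∫ x in Ioo (0:ℝ) 1, σ x * (iteratedDeriv 2 z₀ x)^2 := by
    rw [hGdef]
    refine setIntegral_congr_fun measurableSet_Ioo fun x hx => ?_
    have hm : Icc (0:ℝ) 1 ∈ nhds x := Icc_mem_nhds hx.1 hx.2
    have he : z 0 =ᶠ[nhds x] z₀ := by filter_upwards [hm] with y hy using hic y hy
    have h' : deriv (deriv (z 0)) x = deriv (deriv z₀) x := he.deriv.deriv_eq
    have hzz : z2 0 x = iteratedDeriv 2 z₀ x := by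
      rw [hiter]
      exact h'
    rw [hzz]
  rw [hA, hB, hB', ← hC0]
  have hWit : IntervalIntegrable Wi volume 0 t := hWicont.intervalIntegrable 0 t
  have hFit : IntervalIntegrable Fi volume 0 t := hFicont.intervalIntegrable 0 t
  have hDit : IntervalIntegrable D volume 0 t := hDcont.intervalIntegrable 0 t
  have h1 : 0 ≤ ∫ s in (0:ℝ)..t, (Fi s - Wi s - D s) :=
    intervalIntegral.integral_nonneg h0t fun u _ => by linarith [hkey u]
  have h2 : ∫ s in (0:ℝ)..t, (Fi s - Wi s - D s)
      = (∫ s in (0:ℝ)..t, Fi s) - (∫ s in (0:ℝ)..t, Wi s) - ∫ s in (0:ℝ)..t, D s := by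
    rw [intervalIntegral.integral_sub (hFit.sub hWit) hDit,
      intervalIntegral.integral_sub hFit hWit]
  rw [h2] at h1
  linarith [hFTC, h1]
end

section
/- Let σ∈C²([0,1]), M₁,K>0, γ continuous on [0,1] with |γ(x)|≤M₁, and ỹ infinitely differentiable on [0,T]×[0,1] with |ỹ(T₀,x)|≤K and |∂_x ỹ(T₀,x)|≤K for all x. Let f be continuous on [0,1], let u be infinitely differentiable on [0,T]×[0,1] with u(t,0)=u(t,1)=∂_x u(t,0)=∂_x u(t,1)=0, and assume that at time T₀: ∂_t u(T₀,x) = f(x)∂_x²ỹ(T₀,x) − ∂_x²(σ∂_x²u)(T₀,x) − γ(x)∂_x²u(T₀,x) − ỹ(T₀,x)∂_x u(T₀,x) − ∂_x ỹ(T₀,x)u(T₀,x) − u(T₀,x)∂_x u(T₀,x) for all x∈(0,1). Then there exists C>0, depending only on M₁, K and ‖σ‖_{C²([0,1])}, such that for every λ>0 and every weight φ as in the weight hypotheses: (1/2)∫₀¹ e^{−2λφ(T₀,x)}|f(x)|²|∂_x²ỹ(T₀,x)|² dx ≤ ∫₀¹ e^{−2λφ(T₀,x)}|∂_t u(T₀,x)|²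 dx + C( ‖u(T₀,·)‖²_{H⁴(0,1)} + ‖u(T₀,·)‖⁴_{H¹(0,1)} ). -/
open MeasureTheory Set

/-- squared `H^k(0,1)` norm -/
noncomputable def HkSq (k : ℕ) (u : ℝ → ℝ) : ℝ :=
  ∑ j ∈ Finset.range (k+1), ∫ x in Ioo (0:ℝ) 1, (iteratedDeriv j u x)^2

/- auxiliary lemmas -/

lemma aux_contIntOn {g : ℝ → ℝ} (hg : Continuous g) : IntegrableOn g (Ioo (0:ℝ) 1) :=
  (hg.integrableOn_Icc (a := 0) (b := 1)).mono_set Ioo_subset_Icc_self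

lemma aux_iter_smooth {v : ℝ → ℝ} (hv : ContDiff ℝ (⊤ : ℕ∞) v) (n : ℕ) :
    ContDiff ℝ ((⊤:ℕ∞) : WithTop ℕ∞) (iteratedDeriv n v) := by
  rw [iteratedDeriv_eq_iterate]; exact ContDiff.iterate_deriv n (hv.of_le (by simp))

lemma aux_iter_cont {v : ℝ → ℝ} (hv : ContDiff ℝ (⊤ : ℕ∞) v) (n : ℕ) :
    Continuous (iteratedDeriv n v) := (aux_iter_smooth hv n).continuous

lemma aux_iter_diff {v : ℝ → ℝ} (hv : ContDiff ℝ (⊤ : ℕ∞) v) (n : ℕ) :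
    Differentiable ℝ (iteratedDeriv n v) :=
  (aux_iter_smooth hv n).differentiable (by simp)

lemma aux_deriv_iter {v : ℝ → ℝ} (n : ℕ) :
    deriv (iteratedDeriv n v) = iteratedDeriv (n+1) v := (iteratedDeriv_succ).symm

lemma aux_sigma_deriv_cd {σ : ℝ → ℝ} (hσ : ContDiff ℝ 2 σ) : ContDiff ℝ 1 (deriv σ) := by
  have h : ContDiff ℝ ((1 + 1 : ℕ) : WithTop ℕ∞) σ := by exact_mod_cast hσ
  have := ContDiff.iterate_deriv' 1 1 h
  simpa using this

lemma aux_deriv_deriv_sigma {σ : ℝ → ℝ} :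
    deriv (deriv σ) = iteratedDeriv 2 σ := by
  rw [iteratedDeriv_succ, iteratedDeriv_one]

/-- expansion of the second derivative of `σ · v''` -/
lemma aux_expand2 {σ v : ℝ → ℝ} (hσ : ContDiff ℝ 2 σ) (hv : ContDiff ℝ (⊤ : ℕ∞) v) (x : ℝ) :
    iteratedDeriv 2 (fun z => σ z * iteratedDeriv 2 v z) x
      = iteratedDeriv 2 σ x * iteratedDeriv 2 v x
        + 2 * deriv σ x * iteratedDeriv 3 v x + σ x * iteratedDeriv 4 v x := by
  have hσd : Differentiable ℝ σ := hσ.differentiable (by norm_num)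
  have hσ1 : ContDiff ℝ 1 (deriv σ) := aux_sigma_deriv_cd hσ
  have hσ1d : Differentiable ℝ (deriv σ) := hσ1.differentiable one_ne_zero
  have hvd := aux_iter_diff hv
  have step1 : deriv (fun z => σ z * iteratedDeriv 2 v z)
      = fun z => deriv σ z * iteratedDeriv 2 v z + σ z * iteratedDeriv 3 v z := by
    funext z
    rw [deriv_fun_mul (hσd z) (hvd 2 z)]
    rw [show (3:ℕ) = 2 + 1 from rfl, ← aux_deriv_iter (v:=v) 2]
  have : iteratedDeriv 2 (fun z => σ z * iteratedDeriv 2 v z) x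
      = deriv (deriv (fun z => σ z * iteratedDeriv 2 v z)) x := by
    rw [iteratedDeriv_succ, iteratedDeriv_one]
  rw [this, step1]
  have h1 : DifferentiableAt ℝ (fun z => deriv σ z * iteratedDeriv 2 v z) x :=
    (hσ1d x).mul (hvd 2 x)
  have h2 : DifferentiableAt ℝ (fun z => σ z * iteratedDeriv 3 v z) x :=
    (hσd x).mul (hvd 3 x)
  rw [deriv_fun_add h1 h2, deriv_fun_mul (hσ1d x) (hvd 2 x), deriv_fun_mul (hσd x) (hvd 3 x)]
  rw [show deriv (deriv σ) x = iteratedDeriv 2 σ x from by rw [aux_deriv_deriv_sigma],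
    show deriv (iteratedDeriv 2 v) x = iteratedDeriv 3 v x from by
      rw [show (3:ℕ) = 2 + 1 from rfl, ← aux_deriv_iter (v:=v) 2],
    show deriv (iteratedDeriv 3 v) x = iteratedDeriv 4 v x from by
      rw [show (4:ℕ) = 3 + 1 from rfl, ← aux_deriv_iter (v:=v) 3]]
  ring

lemma aux_cs3 (a b c : ℝ) : (a+b+c)^2 ≤ 3*(a^2+b^2+c^2) := by
  nlinarith [sq_nonneg (a-b), sq_nonneg (a-c), sq_nonneg (b-c)]

lemma aux_cs5 (a b c d e : ℝ) : (a+b+c+d+e)^2 ≤ 5*(a^2+b^2+c^2+d^2+e^2) := by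
  nlinarith [sq_nonneg (a-b), sq_nonneg (a-c), sq_nonneg (a-d), sq_nonneg (a-e),
    sq_nonneg (b-c), sq_nonneg (b-d), sq_nonneg (b-e), sq_nonneg (c-d), sq_nonneg (c-e),
    sq_nonneg (d-e)]

lemma aux_pointwise (B M₁ K Ex p ρ fx y2 v0 v1 v2 v3 v4 s0 s1 s2 gx y0 y1 : ℝ)
    (hEx0 : 0 < Ex) (hEx1 : Ex ≤ 1)
    (hfy : fx * y2 = p + ρ)
    (hρ : ρ = (s2*v2 + 2*s1*v3 + s0*v4) + gx*v2 + y0*v1 + y1*v0 + v0*v1)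
    (hs0 : |s0| ≤ B) (hs1 : |s1| ≤ B) (hs2 : |s2| ≤ B)
    (hγ : |gx| ≤ M₁) (hy0 : |y0| ≤ K) (hy1 : |y1| ≤ K) :
    (1/2) * (Ex * fx^2 * y2^2) ≤ Ex * p^2
      + ((60*B^2 + 5*M₁^2 + 5*K^2 + 5)*(v0^2+v1^2+v2^2+v3^2+v4^2) + 5*(v0^2*v1^2)) := by
  have hs0' : s0^2 ≤ B^2 := sq_le_sq' (abs_le.mp hs0).1 (abs_le.mp hs0).2
  have hs1' : s1^2 ≤ B^2 := sq_le_sq' (abs_le.mp hs1).1 (abs_le.mp hs1).2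
  have hs2' : s2^2 ≤ B^2 := sq_le_sq' (abs_le.mp hs2).1 (abs_le.mp hs2).2
  have hγ' : gx^2 ≤ M₁^2 := sq_le_sq' (abs_le.mp hγ).1 (abs_le.mp hγ).2
  have hy0' : y0^2 ≤ K^2 := sq_le_sq' (abs_le.mp hy0).1 (abs_le.mp hy0).2
  have hy1' : y1^2 ≤ K^2 := sq_le_sq' (abs_le.mp hy1).1 (abs_le.mp hy1).2
  have h5 : ρ^2 ≤ 5*((s2*v2 + 2*s1*v3 + s0*v4)^2 + (gx*v2)^2 + (y0*v1)^2
      + (y1*v0)^2 + (v0*v1)^2) := by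
    rw [hρ]; exact aux_cs5 _ _ _ _ _
  have e1 : (s2*v2)^2 ≤ B^2*v2^2 := by
    calc (s2*v2)^2 = s2^2*v2^2 := by ring
      _ ≤ B^2*v2^2 := mul_le_mul_of_nonneg_right hs2' (sq_nonneg _)
  have e2 : (2*s1*v3)^2 ≤ 4*(B^2*v3^2) := by
    have h := mul_le_mul_of_nonneg_right hs1' (sq_nonneg v3)
    calc (2*s1*v3)^2 = 4*(s1^2*v3^2) := by ring
      _ ≤ 4*(B^2*v3^2) := by linarith only [h]
  have e3 : (s0*v4)^2 ≤ B^2*v4^2 := by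
    calc (s0*v4)^2 = s0^2*v4^2 := by ring
      _ ≤ B^2*v4^2 := mul_le_mul_of_nonneg_right hs0' (sq_nonneg _)
  have eγ : (gx*v2)^2 ≤ M₁^2*v2^2 := by
    calc (gx*v2)^2 = gx^2*v2^2 := by ring
      _ ≤ M₁^2*v2^2 := mul_le_mul_of_nonneg_right hγ' (sq_nonneg _)
  have ey0 : (y0*v1)^2 ≤ K^2*v1^2 := by
    calc (y0*v1)^2 = y0^2*v1^2 := by ring
      _ ≤ K^2*v1^2 := mul_le_mul_of_nonneg_right hy0' (sq_nonneg _)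
  have ey1 : (y1*v0)^2 ≤ K^2*v0^2 := by
    calc (y1*v0)^2 = y1^2*v0^2 := by ring
      _ ≤ K^2*v0^2 := mul_le_mul_of_nonneg_right hy1' (sq_nonneg _)
  have ha : (s2*v2 + 2*s1*v3 + s0*v4)^2 ≤ 3*(B^2*v2^2) + 12*(B^2*v3^2) + 3*(B^2*v4^2) := by
    have h := aux_cs3 (s2*v2) (2*s1*v3) (s0*v4)
    linarith only [h, e1, e2, e3]
  have hee : (v0*v1)^2 = v0^2*v1^2 := by ring
  have n1 : (0:ℝ) ≤ B^2*v0^2 := by positivity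
  have n2 : (0:ℝ) ≤ B^2*v1^2 := by positivity
  have n3 : (0:ℝ) ≤ B^2*v2^2 := by positivity
  have n4 : (0:ℝ) ≤ B^2*v3^2 := by positivity
  have n5 : (0:ℝ) ≤ B^2*v4^2 := by positivity
  have m1 : (0:ℝ) ≤ M₁^2*v0^2 := by positivity
  have m2 : (0:ℝ) ≤ M₁^2*v1^2 := by positivity
  have m3 : (0:ℝ) ≤ M₁^2*v3^2 := by positivity
  have m4 : (0:ℝ) ≤ M₁^2*v4^2 := by positivity
  have k1 : (0:ℝ) ≤ K^2*v0^2 := by positivity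
  have k2 : (0:ℝ) ≤ K^2*v1^2 := by positivity
  have k3 : (0:ℝ) ≤ K^2*v2^2 := by positivity
  have k4 : (0:ℝ) ≤ K^2*v3^2 := by positivity
  have k5 : (0:ℝ) ≤ K^2*v4^2 := by positivity
  have q0 : (0:ℝ) ≤ v0^2 := sq_nonneg _
  have q1 : (0:ℝ) ≤ v1^2 := sq_nonneg _
  have q2 : (0:ℝ) ≤ v2^2 := sq_nonneg _
  have q3 : (0:ℝ) ≤ v3^2 := sq_nonneg _
  have q4 : (0:ℝ) ≤ v4^2 := sq_nonneg _
  have hρG : ρ^2 ≤ (60*B^2 + 5*M₁^2 + 5*K^2 + 5)*(v0^2+v1^2+v2^2+v3^2+v4^2) + 5*(v0^2*v1^2) := by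
    nlinarith only [h5, ha, eγ, ey0, ey1, hee, n1, n2, n3, n4, n5, m1, m2, m3, m4,
      k1, k2, k3, k4, k5, q0, q1, q2, q3, q4]
  have hsq : Ex * fx^2 * y2^2 = Ex * (p + ρ)^2 := by rw [mul_assoc, ← mul_pow, hfy]
  rw [hsq]
  nlinarith only [mul_nonneg hEx0.le (sq_nonneg (p - ρ)),
    mul_nonneg (sub_nonneg.2 hEx1) (sq_nonneg ρ), hρG]

theorem stmt18_lower_bound_at_T0
    (T T₀ M₁ K : ℝ) (σ : ℝ → ℝ)
    (hT : 0 < T) (hT₀ : T₀ ∈ Ioo 0 T) (hM₁ : 0 < M₁) (hK : 0 < K)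
    (hσ : ContDiff ℝ 2 σ) :
    ∃ C > 0, ∀ (γ f : ℝ → ℝ) (yt u : ℝ → ℝ → ℝ),
      Continuous γ → (∀ x ∈ Icc (0:ℝ) 1, |γ x| ≤ M₁) →
      ContDiff ℝ (⊤ : ℕ∞) ↿yt →
      (∀ x ∈ Icc (0:ℝ) 1, |yt T₀ x| ≤ K ∧ |deriv (yt T₀) x| ≤ K) →
      Continuous f →
      ContDiff ℝ (⊤ : ℕ∞) ↿u →
      (∀ t ∈ Icc 0 T, u t 0 = 0 ∧ u t 1 = 0 ∧ deriv (u t) 0 = 0 ∧ deriv (u t) 1 = 0) →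
      (∀ x ∈ Ioo (0:ℝ) 1,
        pdt u T₀ x = f x * iteratedDeriv 2 (yt T₀) x
          - iteratedDeriv 2 (fun z => σ z * iteratedDeriv 2 (u T₀) z) x
          - γ x * iteratedDeriv 2 (u T₀) x
          - yt T₀ x * deriv (u T₀) x
          - deriv (yt T₀) x * u T₀ x
          - u T₀ x * deriv (u T₀) x) →
      ∀ lam > (0:ℝ), ∀ (r : ℝ) (β φ₀ : ℝ → ℝ),
        0 < r → ContDiff ℝ 4 β →
        (∀ x ∈ Icc (0:ℝ) 1, r ≤ β x ∧ r ≤ deriv β x ∧ iteratedDeriv 2 β x ≤ -r) →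
        (∀ x ∈ Icc (0:ℝ) 1, ∀ z ∈ Icc (0:ℝ) 1, |deriv σ x * deriv β x| ≤ r/4 * σ z) →
        ContDiff ℝ 1 φ₀ → φ₀ 0 = 0 → φ₀ T = 0 →
        (∀ t ∈ Ioo 0 T, 0 < φ₀ t ∧ φ₀ t ≤ φ₀ T₀) →
        (1/2) * (∫ x in Ioo (0:ℝ) 1,
            Real.exp (-2*lam*phiW β φ₀ T₀ x) * (f x)^2 * (iteratedDeriv 2 (yt T₀) x)^2)
        ≤ (∫ x in Ioo (0:ℝ) 1,
            Real.exp (-2*lam*phiW β φ₀ T₀ x) * (pdt u T₀ x)^2)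
          + C * (HkSq 4 (u T₀) + (HkSq 1 (u T₀))^2) := by
  -- bound on σ and its derivatives on [0,1]
  have hσc : Continuous σ := hσ.continuous
  have hσ1 : ContDiff ℝ 1 (deriv σ) := aux_sigma_deriv_cd hσ
  have hσ1c : Continuous (deriv σ) := hσ1.continuous
  have hσ2c : Continuous (iteratedDeriv 2 σ) := by
    rw [← aux_deriv_deriv_sigma]; exact hσ1.continuous_deriv le_rfl
  obtain ⟨B₁, hB₁⟩ := (isCompact_Icc (a := (0:ℝ)) (b := 1)).exists_bound_of_continuousOn
    hσc.continuousOn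
  obtain ⟨B₂, hB₂⟩ := (isCompact_Icc (a := (0:ℝ)) (b := 1)).exists_bound_of_continuousOn
    hσ1c.continuousOn
  obtain ⟨B₃, hB₃⟩ := (isCompact_Icc (a := (0:ℝ)) (b := 1)).exists_bound_of_continuousOn
    hσ2c.continuousOn
  set B : ℝ := max B₁ (max B₂ B₃) with hBdef
  have hB : ∀ x ∈ Icc (0:ℝ) 1, |σ x| ≤ B ∧ |deriv σ x| ≤ B ∧ |iteratedDeriv 2 σ x| ≤ B := by
    intro x hx
    refine ⟨le_trans (by simpa using hB₁ x hx) (le_max_left _ _), ?_, ?_⟩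
    · exact le_trans (by simpa using hB₂ x hx) (le_trans (le_max_left _ _) (le_max_right _ _))
    · exact le_trans (by simpa using hB₃ x hx) (le_trans (le_max_right _ _) (le_max_right _ _))
  have hB0 : 0 ≤ B := le_trans (abs_nonneg _) (hB 0 (by norm_num)).1
  clear_value B
  refine ⟨60*B^2 + 5*M₁^2 + 5*K^2 + 5, by positivity, ?_⟩
  set C : ℝ := 60*B^2 + 5*M₁^2 + 5*K^2 + 5 with hCdef
  clear_value C
  intro γ f yt u hγc hγb hyt hytb hfc hu hbc heq lam hlam r β φ₀ hr hβ hβb hσβ hφ₀ hφ00 hφ0T hφ0p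
  -- smoothness of slices
  have hvS : ContDiff ℝ (⊤ : ℕ∞) (u T₀) := hu.comp (contDiff_const.prodMk contDiff_id)
  have hyS : ContDiff ℝ (⊤ : ℕ∞) (yt T₀) := hyt.comp (contDiff_const.prodMk contDiff_id)
  have hvC : ∀ n, Continuous (iteratedDeriv n (u T₀)) := aux_iter_cont hvS
  have hv1C : Continuous (deriv (u T₀)) := by
    rw [← iteratedDeriv_one]; exact hvC 1
  have hy2C : Continuous (iteratedDeriv 2 (yt T₀)) := aux_iter_cont hyS 2
  have hy1C : Continuous (deriv (yt T₀)) := by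
    rw [← iteratedDeriv_one]; exact aux_iter_cont hyS 1
  have hβc : Continuous β := hβ.continuous
  -- the weight
  have hφT₀ : 0 < φ₀ T₀ := (hφ0p T₀ hT₀).1
  have hEc : Continuous (fun x => Real.exp (-2*lam*phiW β φ₀ T₀ x)) :=
    Real.continuous_exp.comp (continuous_const.mul (hβc.div_const _))
  have hE0 : ∀ x : ℝ, 0 < Real.exp (-2*lam*phiW β φ₀ T₀ x) := fun x => Real.exp_pos _
  have hE1 : ∀ x ∈ Ioo (0:ℝ) 1, Real.exp (-2*lam*phiW β φ₀ T₀ x) ≤ 1 := by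
    intro x hx
    have hβx : r ≤ β x := (hβb x (Ioo_subset_Icc_self hx)).1
    have hφ : 0 ≤ phiW β φ₀ T₀ x := by
      unfold phiW; exact div_nonneg (by linarith only [hβx, hr]) hφT₀.le
    rw [Real.exp_le_one_iff]; nlinarith only [mul_nonneg hlam.le hφ]
  -- the remainder R
  set R : ℝ → ℝ := fun x =>
      iteratedDeriv 2 (fun z => σ z * iteratedDeriv 2 (u T₀) z) x
      + γ x * iteratedDeriv 2 (u T₀) x
      + yt T₀ x * deriv (u T₀) x + deriv (yt T₀) x * u T₀ x
      + u T₀ x * deriv (u T₀) x with hRdef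
  clear_value R
  have hRexp : ∀ x : ℝ, R x =
      (iteratedDeriv 2 σ x * iteratedDeriv 2 (u T₀) x
        + 2*deriv σ x*iteratedDeriv 3 (u T₀) x + σ x * iteratedDeriv 4 (u T₀) x)
      + γ x * iteratedDeriv 2 (u T₀) x
      + yt T₀ x * deriv (u T₀) x + deriv (yt T₀) x * u T₀ x
      + u T₀ x * deriv (u T₀) x := by
    intro x; simp only [hRdef]; rw [aux_expand2 hσ hvS x]
  have hRc : Continuous R := by
    have : R = fun x =>
      (iteratedDeriv 2 σ x * iteratedDeriv 2 (u T₀) x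
        + 2*deriv σ x*iteratedDeriv 3 (u T₀) x + σ x * iteratedDeriv 4 (u T₀) x)
      + γ x * iteratedDeriv 2 (u T₀) x
      + yt T₀ x * deriv (u T₀) x + deriv (yt T₀) x * u T₀ x
      + u T₀ x * deriv (u T₀) x := funext hRexp
    rw [this]
    have h2 := hvC 2; have h3 := hvC 3; have h4 := hvC 4
    have h0 := hvC 0
    have h0' : Continuous (u T₀) := by simpa using h0
    have hy0 : Continuous (yt T₀) := hyS.continuous
    fun_prop
  have hPR : ∀ x ∈ Ioo (0:ℝ) 1, pdt u T₀ x = f x * iteratedDeriv 2 (yt T₀) x - R x := by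
    intro x hx; rw [heq x hx]; simp only [hRdef]; ring
  -- Sobolev-type pointwise bound
  have hu0 : u T₀ 0 = 0 := (hbc T₀ ⟨hT₀.1.le, hT₀.2.le⟩).1
  have hvd : Differentiable ℝ (u T₀) := hvS.differentiable (by simp)
  have hHk1 : HkSq 1 (u T₀) = (∫ x in Ioo (0:ℝ) 1, (u T₀ x)^2)
      + ∫ x in Ioo (0:ℝ) 1, (deriv (u T₀) x)^2 := by
    simp [HkSq, Finset.sum_range_succ]
  have huC : Continuous (u T₀) := hvS.continuous
  have hsqC : Continuous (fun t => (u T₀ t)^2 + (deriv (u T₀) t)^2) := by fun_prop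
  have hHk1nn : 0 ≤ HkSq 1 (u T₀) := by
    rw [hHk1]
    exact add_nonneg (setIntegral_nonneg measurableSet_Ioo fun x _ => sq_nonneg _)
      (setIntegral_nonneg measurableSet_Ioo fun x _ => sq_nonneg _)
  have hSob : ∀ x ∈ Ioo (0:ℝ) 1, (u T₀ x)^2 ≤ HkSq 1 (u T₀) := by
    intro x hx
    have hder : ∀ t ∈ uIcc (0:ℝ) x, HasDerivAt (fun y => (u T₀ y)^2)
        (2 * u T₀ t * deriv (u T₀) t) t := by
      intro t _
      have h1 : HasDerivAt (u T₀) (deriv (u T₀) t) t := (hvd t).hasDerivAt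
      have := h1.pow 2
      simpa [mul_comm, mul_assoc] using (show HasDerivAt (fun y => (u T₀ y)^2) _ t from this)
    have hcont2 : Continuous (fun t => 2 * u T₀ t * deriv (u T₀) t) := by fun_prop
    have hftc := intervalIntegral.integral_eq_sub_of_hasDerivAt hder
      (hcont2.intervalIntegrable 0 x)
    have h0x : (0:ℝ) ≤ x := hx.1.le
    have hx1 : x ≤ 1 := hx.2.le
    have hmono1 : (∫ t in (0:ℝ)..x, 2 * u T₀ t * deriv (u T₀) t)
        ≤ ∫ t in (0:ℝ)..x, ((u T₀ t)^2 + (deriv (u T₀) t)^2) := by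
      apply intervalIntegral.integral_mono_on (μ := volume) h0x
        (hcont2.intervalIntegrable 0 x) (hsqC.intervalIntegrable 0 x)
      intro t _; nlinarith only [sq_nonneg (u T₀ t - deriv (u T₀) t)]
    have hadj : (∫ t in (0:ℝ)..x, ((u T₀ t)^2 + (deriv (u T₀) t)^2))
        + (∫ t in x..(1:ℝ), ((u T₀ t)^2 + (deriv (u T₀) t)^2))
        = ∫ t in (0:ℝ)..1, ((u T₀ t)^2 + (deriv (u T₀) t)^2) :=
      intervalIntegral.integral_add_adjacent_intervals
        (hsqC.intervalIntegrable 0 x) (hsqC.intervalIntegrable x 1)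
    have hnn : 0 ≤ ∫ t in x..(1:ℝ), ((u T₀ t)^2 + (deriv (u T₀) t)^2) :=
      intervalIntegral.integral_nonneg hx1 (fun t _ => by positivity)
    have heq1 : (∫ t in (0:ℝ)..1, ((u T₀ t)^2 + (deriv (u T₀) t)^2)) = HkSq 1 (u T₀) := by
      rw [intervalIntegral.integral_of_le zero_le_one, integral_Ioc_eq_integral_Ioo,
        integral_add (aux_contIntOn (by fun_prop)) (aux_contIntOn (by fun_prop)), hHk1]
    have hval : (u T₀ x)^2 = ∫ t in (0:ℝ)..x, 2 * u T₀ t * deriv (u T₀) t := by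
      rw [hftc, hu0]; ring
    linarith only [hmono1, hadj, hnn, heq1, hval]
  -- the controlled majorant G
  set G : ℝ → ℝ := fun x => C*((u T₀ x)^2 + (deriv (u T₀) x)^2 + (iteratedDeriv 2 (u T₀) x)^2
      + (iteratedDeriv 3 (u T₀) x)^2 + (iteratedDeriv 4 (u T₀) x)^2)
      + 5*((u T₀ x)^2*(deriv (u T₀) x)^2) with hGdef
  clear_value G
  have hGc : Continuous G := by
    rw [hGdef]
    have h2 := hvC 2; have h3 := hvC 3; have h4 := hvC 4
    fun_prop
  -- pointwise key inequality
  have hkey : ∀ x ∈ Ioo (0:ℝ) 1,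
      (1/2) * (Real.exp (-2*lam*phiW β φ₀ T₀ x) * (f x)^2 * (iteratedDeriv 2 (yt T₀) x)^2)
      ≤ Real.exp (-2*lam*phiW β φ₀ T₀ x) * (pdt u T₀ x)^2 + G x := by
    intro x hx
    have hxI : x ∈ Icc (0:ℝ) 1 := Ioo_subset_Icc_self hx
    obtain ⟨hb1, hb2, hb3⟩ := hB x hxI
    have hγx := hγb x hxI
    obtain ⟨hyx, hy'x⟩ := hytb x hxI
    have hfy : f x * iteratedDeriv 2 (yt T₀) x = pdt u T₀ x + R x := by
      rw [hPR x hx]; ring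
    have hGx : G x = (60*B^2 + 5*M₁^2 + 5*K^2 + 5)*((u T₀ x)^2 + (deriv (u T₀) x)^2
        + (iteratedDeriv 2 (u T₀) x)^2 + (iteratedDeriv 3 (u T₀) x)^2
        + (iteratedDeriv 4 (u T₀) x)^2)
        + 5*((u T₀ x)^2*(deriv (u T₀) x)^2) := by
      simp only [hGdef, hCdef]
    rw [hGx]
    exact aux_pointwise B M₁ K _ _ _ _ _ _ _ _ _ _ _ _ _ _ _ _ (hE0 x) (hE1 x hx)
      hfy (hRexp x) hb1 hb2 hb3 hγx hyx hy'x
  -- integrability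
  have hfcont : Continuous (fun x => Real.exp (-2*lam*phiW β φ₀ T₀ x) * (f x)^2
      * (iteratedDeriv 2 (yt T₀) x)^2) := by fun_prop
  have int_f : IntegrableOn (fun x => Real.exp (-2*lam*phiW β φ₀ T₀ x) * (f x)^2
      * (iteratedDeriv 2 (yt T₀) x)^2) (Ioo (0:ℝ) 1) := aux_contIntOn hfcont
  have intP : IntegrableOn (fun x => Real.exp (-2*lam*phiW β φ₀ T₀ x) * (pdt u T₀ x)^2)
      (Ioo (0:ℝ) 1) := by
    have hc : Continuous (fun x => Real.exp (-2*lam*phiW β φ₀ T₀ x)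
        * (f x * iteratedDeriv 2 (yt T₀) x - R x)^2) := by fun_prop
    refine (aux_contIntOn hc).congr_fun ?_ measurableSet_Ioo
    intro x hx
    dsimp only
    rw [hPR x hx]
  have intG : IntegrableOn G (Ioo (0:ℝ) 1) := aux_contIntOn hGc
  -- integrate the pointwise inequality
  have hmain : (1/2) * (∫ x in Ioo (0:ℝ) 1,
      Real.exp (-2*lam*phiW β φ₀ T₀ x) * (f x)^2 * (iteratedDeriv 2 (yt T₀) x)^2)
      ≤ (∫ x in Ioo (0:ℝ) 1, Real.exp (-2*lam*phiW β φ₀ T₀ x) * (pdt u T₀ x)^2)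
        + ∫ x in Ioo (0:ℝ) 1, G x := by
    rw [← integral_const_mul, ← integral_add intP intG]
    exact setIntegral_mono_on (int_f.const_mul _) (intP.add intG) measurableSet_Ioo hkey
  -- compute the integral of G
  have ia : IntegrableOn (fun x => (u T₀ x)^2) (Ioo (0:ℝ) 1) := aux_contIntOn (by fun_prop)
  have ib : IntegrableOn (fun x => (deriv (u T₀) x)^2) (Ioo (0:ℝ) 1) :=
    aux_contIntOn (hv1C.pow 2)
  have ic : IntegrableOn (fun x => (iteratedDeriv 2 (u T₀) x)^2) (Ioo (0:ℝ) 1) :=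
    aux_contIntOn ((hvC 2).pow 2)
  have id' : IntegrableOn (fun x => (iteratedDeriv 3 (u T₀) x)^2) (Ioo (0:ℝ) 1) :=
    aux_contIntOn ((hvC 3).pow 2)
  have ie : IntegrableOn (fun x => (iteratedDeriv 4 (u T₀) x)^2) (Ioo (0:ℝ) 1) :=
    aux_contIntOn ((hvC 4).pow 2)
  have iq : IntegrableOn (fun x => (u T₀ x)^2*(deriv (u T₀) x)^2) (Ioo (0:ℝ) 1) :=
    aux_contIntOn (by fun_prop)
  have iab : IntegrableOn (fun x => (u T₀ x)^2 + (deriv (u T₀) x)^2) (Ioo (0:ℝ) 1) :=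
    ia.add ib
  have iabc : IntegrableOn (fun x => (u T₀ x)^2 + (deriv (u T₀) x)^2
      + (iteratedDeriv 2 (u T₀) x)^2) (Ioo (0:ℝ) 1) := iab.add ic
  have iabcd : IntegrableOn (fun x => (u T₀ x)^2 + (deriv (u T₀) x)^2
      + (iteratedDeriv 2 (u T₀) x)^2 + (iteratedDeriv 3 (u T₀) x)^2) (Ioo (0:ℝ) 1) :=
    iabc.add id'
  have iabcde : IntegrableOn (fun x => (u T₀ x)^2 + (deriv (u T₀) x)^2
      + (iteratedDeriv 2 (u T₀) x)^2 + (iteratedDeriv 3 (u T₀) x)^2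
      + (iteratedDeriv 4 (u T₀) x)^2) (Ioo (0:ℝ) 1) := iabcd.add ie
  have hsum5 : (∫ x in Ioo (0:ℝ) 1, ((u T₀ x)^2 + (deriv (u T₀) x)^2
      + (iteratedDeriv 2 (u T₀) x)^2 + (iteratedDeriv 3 (u T₀) x)^2
      + (iteratedDeriv 4 (u T₀) x)^2))
      = (∫ x in Ioo (0:ℝ) 1, (u T₀ x)^2) + (∫ x in Ioo (0:ℝ) 1, (deriv (u T₀) x)^2)
      + (∫ x in Ioo (0:ℝ) 1, (iteratedDeriv 2 (u T₀) x)^2)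
      + (∫ x in Ioo (0:ℝ) 1, (iteratedDeriv 3 (u T₀) x)^2)
      + (∫ x in Ioo (0:ℝ) 1, (iteratedDeriv 4 (u T₀) x)^2) := by
    calc (∫ x in Ioo (0:ℝ) 1, ((u T₀ x)^2 + (deriv (u T₀) x)^2
        + (iteratedDeriv 2 (u T₀) x)^2 + (iteratedDeriv 3 (u T₀) x)^2
        + (iteratedDeriv 4 (u T₀) x)^2))
        = (∫ x in Ioo (0:ℝ) 1, ((u T₀ x)^2 + (deriv (u T₀) x)^2
          + (iteratedDeriv 2 (u T₀) x)^2 + (iteratedDeriv 3 (u T₀) x)^2))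
          + ∫ x in Ioo (0:ℝ) 1, (iteratedDeriv 4 (u T₀) x)^2 := integral_add iabcd ie
      _ = ((∫ x in Ioo (0:ℝ) 1, ((u T₀ x)^2 + (deriv (u T₀) x)^2
          + (iteratedDeriv 2 (u T₀) x)^2))
          + ∫ x in Ioo (0:ℝ) 1, (iteratedDeriv 3 (u T₀) x)^2)
          + ∫ x in Ioo (0:ℝ) 1, (iteratedDeriv 4 (u T₀) x)^2 := by
          rw [integral_add iabc id']
      _ = (((∫ x in Ioo (0:ℝ) 1, ((u T₀ x)^2 + (deriv (u T₀) x)^2))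
          + ∫ x in Ioo (0:ℝ) 1, (iteratedDeriv 2 (u T₀) x)^2)
          + ∫ x in Ioo (0:ℝ) 1, (iteratedDeriv 3 (u T₀) x)^2)
          + ∫ x in Ioo (0:ℝ) 1, (iteratedDeriv 4 (u T₀) x)^2 := by
          rw [integral_add iab ic]
      _ = _ := by rw [integral_add ia ib]
  have hHk4 : HkSq 4 (u T₀) = (∫ x in Ioo (0:ℝ) 1, (u T₀ x)^2)
      + (∫ x in Ioo (0:ℝ) 1, (deriv (u T₀) x)^2)
      + (∫ x in Ioo (0:ℝ) 1, (iteratedDeriv 2 (u T₀) x)^2)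
      + (∫ x in Ioo (0:ℝ) 1, (iteratedDeriv 3 (u T₀) x)^2)
      + (∫ x in Ioo (0:ℝ) 1, (iteratedDeriv 4 (u T₀) x)^2) := by
    simp [HkSq, Finset.sum_range_succ]
  have hGint : (∫ x in Ioo (0:ℝ) 1, G x) = C * HkSq 4 (u T₀)
      + 5 * ∫ x in Ioo (0:ℝ) 1, (u T₀ x)^2*(deriv (u T₀) x)^2 := by
    simp only [hGdef]
    calc (∫ x in Ioo (0:ℝ) 1, (C*((u T₀ x)^2 + (deriv (u T₀) x)^2 + (iteratedDeriv 2 (u T₀) x)^2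
        + (iteratedDeriv 3 (u T₀) x)^2 + (iteratedDeriv 4 (u T₀) x)^2)
        + 5*((u T₀ x)^2*(deriv (u T₀) x)^2)))
        = (∫ x in Ioo (0:ℝ) 1, C*((u T₀ x)^2 + (deriv (u T₀) x)^2
          + (iteratedDeriv 2 (u T₀) x)^2 + (iteratedDeriv 3 (u T₀) x)^2
          + (iteratedDeriv 4 (u T₀) x)^2))
          + ∫ x in Ioo (0:ℝ) 1, 5*((u T₀ x)^2*(deriv (u T₀) x)^2) :=
          integral_add (iabcde.const_mul C) (iq.const_mul 5)
      _ = C * HkSq 4 (u T₀) + 5 * ∫ x in Ioo (0:ℝ) 1, (u T₀ x)^2*(deriv (u T₀) x)^2 := by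
          rw [integral_const_mul, integral_const_mul, hsum5, ← hHk4]
  -- quartic bound
  have hQ : (∫ x in Ioo (0:ℝ) 1, (u T₀ x)^2*(deriv (u T₀) x)^2) ≤ (HkSq 1 (u T₀))^2 := by
    have h1 : ∀ x ∈ Ioo (0:ℝ) 1, (u T₀ x)^2*(deriv (u T₀) x)^2
        ≤ HkSq 1 (u T₀) * (deriv (u T₀) x)^2 :=
      fun x hx => mul_le_mul_of_nonneg_right (hSob x hx) (sq_nonneg _)
    have h2 := setIntegral_mono_on iq (ib.const_mul (HkSq 1 (u T₀))) measurableSet_Ioo h1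
    rw [integral_const_mul] at h2
    have h3 : (∫ x in Ioo (0:ℝ) 1, (deriv (u T₀) x)^2) ≤ HkSq 1 (u T₀) := by
      rw [hHk1]
      have : 0 ≤ ∫ x in Ioo (0:ℝ) 1, (u T₀ x)^2 :=
        setIntegral_nonneg measurableSet_Ioo fun x _ => sq_nonneg _
      linarith only [this]
    nlinarith only [h2, mul_le_mul_of_nonneg_left h3 hHk1nn]
  have hQnn : 0 ≤ ∫ x in Ioo (0:ℝ) 1, (u T₀ x)^2*(deriv (u T₀) x)^2 :=
    setIntegral_nonneg measurableSet_Ioo fun x _ => by positivity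
  have hC5 : (5:ℝ) ≤ C := by rw [hCdef]; nlinarith only [sq_nonneg B, sq_nonneg M₁, sq_nonneg K]
  have hfin : 5 * (∫ x in Ioo (0:ℝ) 1, (u T₀ x)^2*(deriv (u T₀) x)^2)
      ≤ C * (HkSq 1 (u T₀))^2 := by
    nlinarith only [hQ, hQnn, hC5, sq_nonneg (HkSq 1 (u T₀))]
  calc (1/2) * (∫ x in Ioo (0:ℝ) 1,
      Real.exp (-2*lam*phiW β φ₀ T₀ x) * (f x)^2 * (iteratedDeriv 2 (yt T₀) x)^2)
      ≤ (∫ x in Ioo (0:ℝ) 1, Real.exp (-2*lam*phiW β φ₀ T₀ x) * (pdt u T₀ x)^2)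
        + ∫ x in Ioo (0:ℝ) 1, G x := hmain
    _ ≤ (∫ x in Ioo (0:ℝ) 1, Real.exp (-2*lam*phiW β φ₀ T₀ x) * (pdt u T₀ x)^2)
        + C * (HkSq 4 (u T₀) + (HkSq 1 (u T₀))^2) := by
        rw [hGint]; linarith only [hfin]
end
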